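/- arXiv:2203.08662 — 14 statements merged into one kernel-verified Lean document; each statement's English description precedes it below -/
import Mathlib

section
/- Let x ∈ ℓ∞ with exactly k accumulation points and y ∈ ℓ∞ with exactly n accumulation points, and let z = αx + βy with α ≠ 0 and β ≠ 0. Then max{n/k, k/n} ≤ |L_z| ≤ kn, where L_z is the set of accumulation points of z. -/
open Filter Topology Set

/-- The set of accumulation points of a real sequence. -/
def AccPts (x : ℕ → ℝ) : Set ℝ := {η | ∀ ε > 0, {n : ℕ | |x n - η| < ε}.Infinite}

/-! Every accumulation point of `z = α x + β y` is `α a + β b` with `a ∈ L_x`, `b ∈ L_y`: the pair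
sequence `(x, y)` is bounded, so along the indices where `z` is close to a cluster point `η` it
has a cluster point `(a, b)`, and continuity forces `η = α a + β b`. Hence `|L_z| ≤ |L_x| |L_y|`.
Since `α, β ≠ 0`, also `x` is a combination of `z` and `y`, and `y` one of `z` and `x`, which
gives the two lower bounds. -/

theorem mem_accPts_iff_mapClusterPt {x : ℕ → ℝ} {η : ℝ} :
    η ∈ AccPts x ↔ MapClusterPt η atTop x := by
  simp only [AccPts, mem_ofPred_eq, Metric.nhds_basis_ball.mapClusterPt_iff_frequently,
    Nat.frequently_atTop_iff_infinite, Metric.mem_ball, Real.dist_eq]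

theorem MapClusterPt.exists_mapClusterPt_of_isCompact {ι X Y : Type*} [TopologicalSpace X]
    [TopologicalSpace Y] [T2Space Y] {F : Filter ι} {u : ι → X} {K : Set X} (hK : IsCompact K)
    (huK : ∀ᶠ i in F, u i ∈ K) {f : X → Y} (hf : Continuous f) {y : Y}
    (h : MapClusterPt y F (f ∘ u)) : ∃ p ∈ K, MapClusterPt p F u ∧ f p = y := by
  set G := F ⊓ comap (f ∘ u) (𝓝 y)
  have : G.NeBot := neBot_inf_comap_iff_map.2 (inf_comm (𝓝 y) _ ▸ h)
  obtain ⟨p, hpK, hp⟩ :=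
    hK.exists_mapClusterPt_of_frequently (l := G) (huK.filter_mono inf_le_left).frequently
  refine ⟨p, hpK, hp.mono inf_le_left, ?_⟩
  have hfp : ClusterPt (f p) (𝓝 y) :=
    (hp.continuousAt_comp hf.continuousAt).clusterPt.mono (tendsto_comap.mono_left inf_le_right)
  by_contra hne
  exact hfp.ne (disjoint_nhds_nhds.2 hne).eq_bot

theorem exists_abs_le_smul_add_smul {x y : ℕ → ℝ} (hx : ∃ C, ∀ m, |x m| ≤ C)
    (hy : ∃ C, ∀ m, |y m| ≤ C) (α β : ℝ) : ∃ C, ∀ m, |(α • x + β • y) m| ≤ C := by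
  obtain ⟨C, hC⟩ := hx
  obtain ⟨D, hD⟩ := hy
  refine ⟨|α| * C + |β| * D, fun m => ?_⟩
  calc |α * x m + β * y m| ≤ |α| * |x m| + |β| * |y m| := by
        simpa only [abs_mul] using abs_add_le (α * x m) (β * y m)
    _ ≤ |α| * C + |β| * D := by gcongr <;> simp only [hC, hD]

theorem accPts_smul_add_smul_subset {x y : ℕ → ℝ} (hx : ∃ C, ∀ m, |x m| ≤ C)
    (hy : ∃ C, ∀ m, |y m| ≤ C) (α β : ℝ) :
    AccPts (α • x + β • y) ⊆ (fun p : ℝ × ℝ => α * p.1 + β * p.2) '' (AccPts x ×ˢ AccPts y) := by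
  obtain ⟨C, hC⟩ := hx
  obtain ⟨D, hD⟩ := hy
  intro η hη
  have hK : IsCompact (Icc (-C) C ×ˢ Icc (-D) D) := isCompact_Icc.prod isCompact_Icc
  have huK : ∀ᶠ m in atTop, (x m, y m) ∈ Icc (-C) C ×ˢ Icc (-D) D :=
    Eventually.of_forall fun m => ⟨abs_le.1 (hC m), abs_le.1 (hD m)⟩
  obtain ⟨p, -, hp, rfl⟩ := (mem_accPts_iff_mapClusterPt.1 hη).exists_mapClusterPt_of_isCompact
    hK huK (by fun_prop : Continuous fun p : ℝ × ℝ => α * p.1 + β * p.2)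
  exact ⟨p, ⟨mem_accPts_iff_mapClusterPt.2 (hp.continuousAt_comp continuous_fst.continuousAt),
    mem_accPts_iff_mapClusterPt.2 (hp.continuousAt_comp continuous_snd.continuousAt)⟩, rfl⟩

theorem finite_accPts_smul_add_smul {x y : ℕ → ℝ} (hx : ∃ C, ∀ m, |x m| ≤ C)
    (hy : ∃ C, ∀ m, |y m| ≤ C) (hxf : (AccPts x).Finite) (hyf : (AccPts y).Finite) (α β : ℝ) :
    (AccPts (α • x + β • y)).Finite :=
  ((hxf.prod hyf).image _).subset (accPts_smul_add_smul_subset hx hy α β)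

theorem ncard_accPts_smul_add_smul_le {x y : ℕ → ℝ} (hx : ∃ C, ∀ m, |x m| ≤ C)
    (hy : ∃ C, ∀ m, |y m| ≤ C) (hxf : (AccPts x).Finite) (hyf : (AccPts y).Finite) (α β : ℝ) :
    (AccPts (α • x + β • y)).ncard ≤ (AccPts x).ncard * (AccPts y).ncard :=
  calc (AccPts (α • x + β • y)).ncard
      ≤ ((fun p : ℝ × ℝ => α * p.1 + β * p.2) '' (AccPts x ×ˢ AccPts y)).ncard :=
        ncard_le_ncard (accPts_smul_add_smul_subset hx hy α β) ((hxf.prod hyf).image _)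
    _ ≤ (AccPts x ×ˢ AccPts y).ncard := ncard_image_le (hxf.prod hyf)
    _ = (AccPts x).ncard * (AccPts y).ncard := ncard_prod

theorem stmt_1 (x y : ℕ → ℝ) (hx : ∃ C, ∀ m, |x m| ≤ C) (hy : ∃ C, ∀ m, |y m| ≤ C)
    (k n : ℕ) (hxf : (AccPts x).Finite) (hxk : (AccPts x).ncard = k)
    (hyf : (AccPts y).Finite) (hyn : (AccPts y).ncard = n)
    (α β : ℝ) (hα : α ≠ 0) (hβ : β ≠ 0) (z : ℕ → ℝ) (hz : z = α • x + β • y) :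
    (AccPts z).Finite ∧ n ≤ (AccPts z).ncard * k ∧ k ≤ (AccPts z).ncard * n ∧
      (AccPts z).ncard ≤ k * n := by
  have hzb : ∃ C, ∀ m, |z m| ≤ C := hz ▸ exists_abs_le_smul_add_smul hx hy α β
  have hzf : (AccPts z).Finite := hz ▸ finite_accPts_smul_add_smul hx hy hxf hyf α β
  have hxz : x = α⁻¹ • z + (-(β / α)) • y := by
    ext m; simp only [hz, Pi.add_apply, Pi.smul_apply, smul_eq_mul]; field_simp; ring
  have hyz : y = β⁻¹ • z + (-(α / β)) • x := by
    ext m; simp only [hz, Pi.add_apply, Pi.smul_apply, smul_eq_mul]; field_simp; ring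
  have hzk := ncard_accPts_smul_add_smul_le hzb hy hzf hyf α⁻¹ (-(β / α))
  have hzn := ncard_accPts_smul_add_smul_le hzb hx hzf hxf β⁻¹ (-(α / β))
  have hkn := ncard_accPts_smul_add_smul_le hx hy hxf hyf α β
  rw [← hxz, hxk, hyn] at hzk
  rw [← hyz, hxk, hyn] at hzn
  rw [← hz, hxk, hyn] at hkn
  exact ⟨hzf, hzn, hzk, hkn⟩
end

section
/- Let x ∈ ℓ∞ be a bounded sequence with exactly n accumulation points. Then there exist a partition {S₁, …, Sₙ} of ℕ into infinite sets and mutually distinct scalars ξ₁, …, ξₙ ∈ ℝ such that x − (ξ₁·1_{S₁} + ⋯ + ξₙ·1_{Sₙ}) converges to 0. -/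
open Filter Topology Set

theorem stmt_2 (x : ℕ → ℝ) (hx : ∃ C, ∀ m, |x m| ≤ C)
    (n : ℕ) (hxf : (AccPts x).Finite) (hxn : (AccPts x).ncard = n) :
    ∃ (S : Fin n → Set ℕ) (ξ : Fin n → ℝ),
      (∀ i, (S i).Infinite) ∧ Pairwise (fun i j => Disjoint (S i) (S j)) ∧
      (⋃ i, S i) = Set.univ ∧ Function.Injective ξ ∧
      Tendsto (fun m => x m - ∑ i, (S i).indicator (fun _ => ξ i) m) atTop (𝓝 0) := by
  obtain ⟨C, hC⟩ := hx
  have hmem : ∀ m, x m ∈ Set.Icc (-C) C := fun m => abs_le.1 (hC m)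
  -- the set of accumulation points is nonempty (Bolzano–Weierstrass)
  have hA : (AccPts x).Nonempty := by
    obtain ⟨a, _, φ, hφ, hconv⟩ := isCompact_Icc.tendsto_subseq hmem
    refine ⟨a, fun ε hε => ?_⟩
    obtain ⟨N, hN⟩ := Metric.tendsto_atTop.1 hconv ε hε
    apply Set.infinite_of_injective_forall_mem (f := fun k : ℕ => φ (k + N))
    · intro a b hab
      have := hφ.injective hab
      omega
    · intro k
      have := hN (k + N) (Nat.le_add_left N k)
      simpa [Real.dist_eq] using this
  have hn : 0 < n := by
    rw [← hxn]
    exact (Set.ncard_pos hxf).2 hA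
  haveI : NeZero n := ⟨hn.ne'⟩
  -- enumerate the accumulation points
  have hcard : hxf.toFinset.card = n := by
    rw [← Set.ncard_eq_toFinset_card _ hxf, hxn]
  let e : Fin n ≃ {a // a ∈ hxf.toFinset} := (Finset.equivFinOfCardEq hcard).symm
  set ξ : Fin n → ℝ := fun i => (e i : ℝ) with hξdef
  have hξinj : Function.Injective ξ := fun a b h => e.injective (Subtype.ext h)
  have hξA : ∀ i, ξ i ∈ AccPts x := fun i => hxf.mem_toFinset.1 (e i).2
  have hξsurj : ∀ a ∈ AccPts x, ∃ i, ξ i = a := by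
    intro a ha
    refine ⟨e.symm ⟨a, hxf.mem_toFinset.2 ha⟩, ?_⟩
    simp [hξdef]
  -- nearest-point assignment
  have hc : ∀ m, ∃ i : Fin n, ∀ j : Fin n, |x m - ξ i| ≤ |x m - ξ j| := by
    intro m
    obtain ⟨i, -, hi⟩ := Finset.exists_min_image Finset.univ
      (fun i => |x m - ξ i|) Finset.univ_nonempty
    exact ⟨i, fun j => hi j (Finset.mem_univ j)⟩
  choose c hcmin using hc
  -- separation: near ξ i the nearest point is ξ i
  have hδ : ∀ i : Fin n, ∃ δ > 0, ∀ m, |x m - ξ i| < δ → c m = i := by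
    intro i
    set T : Finset ℝ :=
      insert 1 ((Finset.univ.erase i).image (fun j => |ξ i - ξ j|)) with hT
    have hTne : T.Nonempty := ⟨1, Finset.mem_insert_self _ _⟩
    set M : ℝ := T.min' hTne with hM
    have hMpos : 0 < M := by
      have hmem : M ∈ T := T.min'_mem hTne
      rcases Finset.mem_insert.1 hmem with h | h
      · rw [h]; norm_num
      · obtain ⟨j, hj, hjval⟩ := Finset.mem_image.1 h
        rw [← hjval]
        exact abs_pos.2 (sub_ne_zero.2 fun hh =>
          (Finset.ne_of_mem_erase hj) (hξinj hh).symm)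
    refine ⟨M / 2, by positivity, fun m hm => ?_⟩
    by_contra hne
    have h1 : |x m - ξ (c m)| ≤ |x m - ξ i| := hcmin m i
    have h2 : M ≤ |ξ i - ξ (c m)| := by
      apply Finset.min'_le
      rw [hT]
      exact Finset.mem_insert_of_mem
        (Finset.mem_image.2 ⟨c m, Finset.mem_erase.2 ⟨hne, Finset.mem_univ _⟩, rfl⟩)
    have h3 : |ξ i - ξ (c m)| ≤ |x m - ξ i| + |x m - ξ (c m)| := by
      calc |ξ i - ξ (c m)| = |(ξ i - x m) + (x m - ξ (c m))| := by ring_nf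
        _ ≤ |ξ i - x m| + |x m - ξ (c m)| := abs_add_le _ _
        _ = |x m - ξ i| + |x m - ξ (c m)| := by rw [abs_sub_comm]
    linarith
  -- the distance to the nearest accumulation point tends to zero
  have h0 : Tendsto (fun m => x m - ξ (c m)) atTop (𝓝 0) := by
    rw [Metric.tendsto_atTop]
    intro ε hε
    by_contra hcon
    push_neg at hcon
    have hfreq : ∃ᶠ m in atTop, ε ≤ |x m - ξ (c m)| := by
      rw [frequently_atTop]
      intro N
      obtain ⟨m, hm1, hm2⟩ := hcon N
      refine ⟨m, hm1, ?_⟩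
      rwa [Real.dist_eq, sub_zero] at hm2
    set F : Filter ℕ := atTop ⊓ 𝓟 {m | ε ≤ |x m - ξ (c m)|} with hF
    haveI hFne : F.NeBot := Filter.frequently_iff_neBot.1 hfreq
    have hle : map x F ≤ 𝓟 (Set.Icc (-C) C) := by
      rw [le_principal_iff, Filter.mem_map]
      exact Filter.Eventually.of_forall fun m => hmem m
    obtain ⟨a, _, ha⟩ := isCompact_Icc.exists_clusterPt hle
    have hmap : ∀ s ∈ 𝓝 a, ∃ᶠ m in F, x m ∈ s := mapClusterPt_iff_frequently.1 ha
    have haA : a ∈ AccPts x := by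
      intro ε' hε'
      have := hmap (Metric.ball a ε') (Metric.ball_mem_nhds a hε')
      have h2 : ∃ᶠ m in atTop, |x m - a| < ε' := by
        apply Filter.Frequently.filter_mono _ (inf_le_left (b := 𝓟 {m | ε ≤ |x m - ξ (c m)|}))
        apply this.mono
        intro m hm
        simpa [Real.dist_eq] using hm
      exact Nat.frequently_atTop_iff_infinite.1 h2
    obtain ⟨j, hj⟩ := hξsurj a haA
    have hball := hmap (Metric.ball a ε) (Metric.ball_mem_nhds a hε)
    have hTin : ∀ᶠ m in F, ε ≤ |x m - ξ (c m)| := by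
      rw [hF, eventually_inf_principal]
      exact Filter.Eventually.of_forall fun m hm => hm
    obtain ⟨m, hm1, hm2⟩ := (hball.and_eventually hTin).exists
    have : |x m - ξ j| < ε := by
      rw [hj]
      simpa [Real.dist_eq] using hm1
    have := hcmin m j
    linarith
  -- assemble the answer
  refine ⟨fun i => {m | c m = i}, ξ, ?_, ?_, ?_, hξinj, ?_⟩
  · intro i
    obtain ⟨δ, hδpos, hδi⟩ := hδ i
    have hinf := hξA i δ hδpos
    exact hinf.mono fun m hm => hδi m hm
  · intro i j hij
    rw [Set.disjoint_left]
    intro m hmi hmj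
    exact hij (hmi.symm.trans hmj)
  · ext m
    simp only [Set.mem_iUnion, Set.mem_setOf_eq, Set.mem_univ, iff_true]
    exact ⟨c m, rfl⟩
  · have hsum : ∀ m, ∑ i, ({m' | c m' = i}).indicator (fun _ => ξ i) m = ξ (c m) := by
      intro m
      rw [Finset.sum_eq_single (c m)]
      · exact Set.indicator_of_mem rfl _
      · intro j _ hj
        exact Set.indicator_of_notMem (fun h => hj (Set.mem_setOf_eq ▸ h).symm) _
      · simp
    simpa only [hsum] using h0
end

section
/- Let x ∈ ℓ∞ have exactly n accumulation points with two representations x ∼_{c₀} ξ₁·1_{S₁} + ⋯ + ξₙ·1_{Sₙ} and x ∼_{c₀} η₁·1_{T₁} + ⋯ + η_m·1_{T_m}, where {S_i} and {T_j} are partitions of ℕ into infinite sets and the ξ_i (resp. η_j) are mutually distinct. Then n = m and there is a permutation σ of {1,…,n} with η_j = ξ_{σ(j)} and T_j equal to S_{σ(j)} up to a finite set, for every j. -/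
open Filter Topology Set

theorem accPts_eq_setOf_mapClusterPt (x : ℕ → ℝ) :
    AccPts x = {a | MapClusterPt a atTop x} := by
  ext a
  simp only [AccPts, mem_ofPred_eq, Metric.nhds_basis_ball.mapClusterPt_iff_frequently,
    Nat.frequently_atTop_iff_infinite, Metric.mem_ball, Real.dist_eq]

theorem Nat.atTop_inf_principal_neBot_iff {s : Set ℕ} : (atTop ⊓ 𝓟 s).NeBot ↔ s.Infinite := by
  rw [← Nat.cofinite_eq_atTop, cofinite_inf_principal_neBot_iff]

section Cover

variable {α ι : Type*} [Finite ι] {s : ι → Set α}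

theorem Filter.eventually_of_forall_inf_principal (hs : ⋃ i, s i = univ) {f : Filter α}
    {p : α → Prop} (h : ∀ i, ∀ᶠ a in f ⊓ 𝓟 (s i), p a) : ∀ᶠ a in f, p a := by
  filter_upwards [eventually_all.2 fun i => eventually_inf_principal.1 (h i)] with a ha
  obtain ⟨i, hi⟩ := mem_iUnion.1 (hs ▸ mem_univ a)
  exact ha i hi

theorem Set.Finite.diff_of_iUnion_eq_univ (hs : ⋃ i, s i = univ) {t : Set α} {i₀ : ι}
    (h : ∀ i ≠ i₀, (s i ∩ t).Finite) : (t \ s i₀).Finite := by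
  refine (finite_iUnion fun i : {i // i ≠ i₀} => h i i.2).subset ?_
  rintro a ⟨hat, hai₀⟩
  obtain ⟨i, hi⟩ := mem_iUnion.1 (hs ▸ mem_univ a)
  exact mem_iUnion.2 ⟨⟨i, fun h => hai₀ (h ▸ hi)⟩, hi, hat⟩

theorem MapClusterPt.mem_range_of_tendsto_inf_principal {β : Type*} [TopologicalSpace β]
    [T2Space β] (hs : ⋃ i, s i = univ) {f : Filter α} {u : α → β} {b : ι → β}
    (h : ∀ i, Tendsto u (f ⊓ 𝓟 (s i)) (𝓝 (b i))) {y : β} (hy : MapClusterPt y f u) :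
    y ∈ range b := by
  by_contra hyb
  have hsep : ∀ i, ∃ U ∈ 𝓝 y, ∃ V ∈ 𝓝 (b i), Disjoint U V := fun i =>
    Filter.disjoint_iff.1 (disjoint_nhds_nhds.2 fun hi => hyb ⟨i, hi.symm⟩)
  choose U hU V hV hUV using hsep
  have hfar : ∀ᶠ a in f, u a ∉ ⋂ i, U i :=
    Filter.eventually_of_forall_inf_principal hs fun i => by
      filter_upwards [h i (hV i)] with a ha hU'
      exact disjoint_left.1 (hUV i) (mem_iInter.1 hU' i) ha
  exact mapClusterPt_iff_frequently.1 hy _ (iInter_mem.2 hU) hfar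

end Cover

section StepSequence

variable {ι : Type*} [Fintype ι] {x : ℕ → ℝ} {S : ι → Set ℕ} {ξ : ι → ℝ}

theorem sum_indicator_apply_of_mem (hS : Pairwise (fun i j => Disjoint (S i) (S j)))
    {i : ι} {l : ℕ} (hl : l ∈ S i) : ∑ i', (S i').indicator (fun _ => ξ i') l = ξ i := by
  rw [Finset.sum_eq_single i (fun j _ hj => indicator_of_notMem
    (disjoint_left.1 (hS hj) · hl) _) (by simp), indicator_of_mem hl]

theorem tendsto_inf_principal_of_tendsto_sub_sum_indicator
    (hS : Pairwise (fun i j => Disjoint (S i) (S j)))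
    (hx : Tendsto (fun l => x l - ∑ i, (S i).indicator (fun _ => ξ i) l) atTop (𝓝 0)) (i : ι) :
    Tendsto x (atTop ⊓ 𝓟 (S i)) (𝓝 (ξ i)) := by
  rw [← tendsto_sub_nhds_zero_iff]
  refine (hx.mono_left inf_le_left).congr' ?_
  filter_upwards [mem_inf_of_right (mem_principal_self (S i))] with l hl
  rw [sum_indicator_apply_of_mem hS hl]

theorem accPts_eq_range (hSinf : ∀ i, (S i).Infinite)
    (hS : Pairwise (fun i j => Disjoint (S i) (S j))) (hScov : ⋃ i, S i = univ)
    (hx : Tendsto (fun l => x l - ∑ i, (S i).indicator (fun _ => ξ i) l) atTop (𝓝 0)) :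
    AccPts x = range ξ := by
  have hlim := tendsto_inf_principal_of_tendsto_sub_sum_indicator hS hx
  rw [accPts_eq_setOf_mapClusterPt]
  refine Subset.antisymm (fun y hy => hy.mem_range_of_tendsto_inf_principal hScov hlim) ?_
  rintro _ ⟨i, rfl⟩
  have := Nat.atTop_inf_principal_neBot_iff.2 (hSinf i)
  exact ((hlim i).mapClusterPt).mono inf_le_left

end StepSequence

theorem inter_finite_of_tendsto_inf_principal {β : Type*} [TopologicalSpace β] [T2Space β]
    {x : ℕ → β} {s t : Set ℕ} {a b : β}
    (hs : Tendsto x (atTop ⊓ 𝓟 s) (𝓝 a)) (ht : Tendsto x (atTop ⊓ 𝓟 t) (𝓝 b)) (hab : a ≠ b) :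
    (s ∩ t).Finite := by
  by_contra hst
  have := Nat.atTop_inf_principal_neBot_iff.2 hst
  exact hab (tendsto_nhds_unique
    (hs.mono_left (inf_le_inf_left _ (principal_mono.2 inter_subset_left)))
    (ht.mono_left (inf_le_inf_left _ (principal_mono.2 inter_subset_right))))

theorem stmt_3_general (x : ℕ → ℝ)
    (n m : ℕ)
    (S : Fin n → Set ℕ) (ξ : Fin n → ℝ)
    (hSinf : ∀ i, (S i).Infinite) (hSdisj : Pairwise (fun i j => Disjoint (S i) (S j)))
    (hScov : (⋃ i, S i) = Set.univ) (hξ : Function.Injective ξ)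
    (hSrep : Tendsto (fun l => x l - ∑ i, (S i).indicator (fun _ => ξ i) l) atTop (𝓝 0))
    (T : Fin m → Set ℕ) (η : Fin m → ℝ)
    (hTinf : ∀ j, (T j).Infinite) (hTdisj : Pairwise (fun i j => Disjoint (T i) (T j)))
    (hTcov : (⋃ j, T j) = Set.univ) (hη : Function.Injective η)
    (hTrep : Tendsto (fun l => x l - ∑ j, (T j).indicator (fun _ => η j) l) atTop (𝓝 0)) :
    n = m ∧ ∃ σ : Fin m → Fin n, Function.Bijective σ ∧
      ∀ j, η j = ξ (σ j) ∧ (symmDiff (T j) (S (σ j))).Finite := by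
  have hrange : range η = range ξ := by
    rw [← accPts_eq_range hSinf hSdisj hScov hSrep, accPts_eq_range hTinf hTdisj hTcov hTrep]
  let σ : Fin m ≃ Fin n := (Equiv.ofInjective η hη).trans
    ((Equiv.setCongr hrange).trans (Equiv.ofInjective ξ hξ).symm)
  have hησ : ∀ j, η j = ξ (σ j) := fun j => by
    simp [σ, Equiv.apply_ofInjective_symm]
  have hSlim := tendsto_inf_principal_of_tendsto_sub_sum_indicator hSdisj hSrep
  have hTlim := tendsto_inf_principal_of_tendsto_sub_sum_indicator hTdisj hTrep
  refine ⟨(Fin.equiv_iff_eq.1 ⟨σ⟩).symm, σ, σ.bijective, fun j => ⟨hησ j, ?_⟩⟩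
  refine (Finite.diff_of_iUnion_eq_univ hScov fun i hi => ?_).union
    (Finite.diff_of_iUnion_eq_univ hTcov fun j' hj' => ?_)
  · exact inter_finite_of_tendsto_inf_principal (hSlim i) (hTlim j)
      (hησ j ▸ hξ.ne hi)
  · exact inter_finite_of_tendsto_inf_principal (hTlim j') (hSlim (σ j))
      (hησ j ▸ hη.ne hj')

theorem stmt_3 (x : ℕ → ℝ) (hx : ∃ C, ∀ m, |x m| ≤ C)
    (n m : ℕ) (hxf : (AccPts x).Finite) (hxn : (AccPts x).ncard = n)
    (S : Fin n → Set ℕ) (ξ : Fin n → ℝ)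
    (hSinf : ∀ i, (S i).Infinite) (hSdisj : Pairwise (fun i j => Disjoint (S i) (S j)))
    (hScov : (⋃ i, S i) = Set.univ) (hξ : Function.Injective ξ)
    (hSrep : Tendsto (fun l => x l - ∑ i, (S i).indicator (fun _ => ξ i) l) atTop (𝓝 0))
    (T : Fin m → Set ℕ) (η : Fin m → ℝ)
    (hTinf : ∀ j, (T j).Infinite) (hTdisj : Pairwise (fun i j => Disjoint (T i) (T j)))
    (hTcov : (⋃ j, T j) = Set.univ) (hη : Function.Injective η)
    (hTrep : Tendsto (fun l => x l - ∑ j, (T j).indicator (fun _ => η j) l) atTop (𝓝 0)) :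
    n = m ∧ ∃ σ : Fin m → Fin n, Function.Bijective σ ∧
      ∀ j, η j = ξ (σ j) ∧ (symmDiff (T j) (S (σ j))).Finite :=
  stmt_3_general x n m S ξ hSinf hSdisj hScov hξ hSrep T η hTinf hTdisj hTcov hη hTrep
end

section
/- Let X be a topological vector space over ℝ and Y a linear subspace such that the topological weight of X is at most the dimension of the quotient X/Y. Then there exists a dense linear subspace V of X with V ∩ Y = {0}. -/
open Filter Topology Set

/-- The weight of a topological space: the least cardinality of a topological basis. -/
noncomputable def tweight (X : Type*) [TopologicalSpace X] : Cardinal :=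
  ⨅ B : {B : Set (Set X) // TopologicalSpace.IsTopologicalBasis B}, Cardinal.mk B.1

/-!
Well-order a basis of nonempty open sets `(U i)` of minimal cardinality `κ ≤ dim (X/Y)` so that
every proper initial segment has fewer than `κ` elements. By transfinite recursion pick
`x i ∈ U i` whose class in `X/Y` lies outside the span of the classes of the earlier `x j`:
that span has dimension `< dim (X/Y)`, so its preimage in `X` is a proper subspace, and a proper
subspace of a topological vector space has empty interior. The classes of the `x i` are then
linearly independent, so `V = span {x i}` meets `Y` only in `0`, and `V` is dense because it
meets every basic open set.
-/

universe u

open Cardinal Submodule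

theorem WellFoundedLT.exists_forall_restrict_Iio {ι α : Type*} [LinearOrder ι] [WellFoundedLT ι]
    {P : (i : ι) → (Iio i → α) → α → Prop} (h : ∀ i g, ∃ x, P i g x) :
    ∃ F : ι → α, ∀ i, P i (fun j => F j) (F i) := by
  choose f hf using h
  refine ⟨WellFoundedLT.fix fun i ih => f i fun j => ih j j.2, fun i => ?_⟩
  rw [WellFoundedLT.fix_eq]
  exact hf _ _

theorem linearIndependent_of_notMem_span_image_Iio {K V ι : Type*} [DivisionRing K]
    [AddCommGroup V] [Module K V] [LinearOrder ι] {v : ι → V}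
    (hv : ∀ i, v i ∉ span K (v '' Iio i)) : LinearIndependent K v := by
  rw [← linearIndepOn_univ_iff]
  refine linearIndepOn_of_finite _ fun t _ ht => ?_
  classical
  lift t to Finset ι using ht
  induction t using Finset.induction_on_max with
  | empty => simp
  | insert a s hlt ih =>
    rw [Finset.coe_insert]
    exact (ih (subset_univ _)).insert fun hmem =>
      hv a (span_mono (image_mono fun j hj => hlt j hj) hmem)

theorem Submodule.exists_mem_notMem_of_isOpen {𝕜 X : Type*} [NontriviallyNormedField 𝕜]
    [AddCommGroup X] [Module 𝕜 X] [TopologicalSpace X] [ContinuousAdd X] [ContinuousSMul 𝕜 X]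
    {Z : Submodule 𝕜 X} (hZ : Z ≠ ⊤) {U : Set X} (hU : IsOpen U) (hne : U.Nonempty) :
    ∃ x ∈ U, x ∉ Z := by
  by_contra! hUZ
  exact hZ (Z.eq_top_of_nonempty_interior' (hne.mono (interior_maximal hUZ hU)))

theorem Submodule.span_ne_top_of_mk_lt_rank {K V : Type*} [DivisionRing K] [AddCommGroup V]
    [Module K V] {S : Set V} (hS : #S < Module.rank K V) : span K S ≠ ⊤ := by
  intro htop
  have := rank_span_le (R := K) S
  rw [htop, rank_top] at this
  exact this.not_gt hS

theorem exists_mem_apply_notMem_span_of_isOpen {𝕜 X Q : Type*} [NontriviallyNormedField 𝕜]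
    [AddCommGroup X] [Module 𝕜 X] [TopologicalSpace X] [ContinuousAdd X] [ContinuousSMul 𝕜 X]
    [AddCommGroup Q] [Module 𝕜 Q] {f : X →ₗ[𝕜] Q} (hf : Function.Surjective f) {S : Set Q}
    (hS : #S < Module.rank 𝕜 Q) {U : Set X} (hU : IsOpen U) (hne : U.Nonempty) :
    ∃ x ∈ U, f x ∉ span 𝕜 S := by
  have hZ : (span 𝕜 S).comap f ≠ ⊤ := fun htop =>
    span_ne_top_of_mk_lt_rank hS (comap_injective_of_surjective hf (htop.trans (comap_top f).symm))
  exact exists_mem_notMem_of_isOpen hZ hU hne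

theorem exists_linearIndependent_comp_of_forall_mem {𝕜 X : Type*} {ι Q : Type u}
    [NontriviallyNormedField 𝕜] [AddCommGroup X] [Module 𝕜 X] [TopologicalSpace X]
    [ContinuousAdd X] [ContinuousSMul 𝕜 X] [AddCommGroup Q] [Module 𝕜 Q] {f : X →ₗ[𝕜] Q}
    (hf : Function.Surjective f) [LinearOrder ι] [WellFoundedLT ι]
    (hι : ∀ i : ι, #(Iio i) < Module.rank 𝕜 Q) {U : ι → Set X} (hU : ∀ i, IsOpen (U i))
    (hne : ∀ i, (U i).Nonempty) :
    ∃ F : ι → X, (∀ i, F i ∈ U i) ∧ LinearIndependent 𝕜 (f ∘ F) := by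
  obtain ⟨F, hF⟩ := WellFoundedLT.exists_forall_restrict_Iio
    (P := fun i g x => x ∈ U i ∧ f x ∉ span 𝕜 (range (f ∘ g))) fun i _ =>
      exists_mem_apply_notMem_span_of_isOpen hf (mk_range_le.trans_lt (hι i)) (hU i) (hne i)
  refine ⟨F, fun i => (hF i).1, linearIndependent_of_notMem_span_image_Iio fun i => ?_⟩
  rw [image_eq_range]
  exact (hF i).2

theorem stmt_5 (X : Type*) [AddCommGroup X] [Module ℝ X] [TopologicalSpace X]
    [IsTopologicalAddGroup X] [ContinuousSMul ℝ X] (Y : Submodule ℝ X)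
    (h : tweight X ≤ Module.rank ℝ (X ⧸ Y)) :
    ∃ V : Submodule ℝ X, Dense (V : Set X) ∧ V ⊓ Y = ⊥ := by
  have : Nonempty {B : Set (Set X) // TopologicalSpace.IsTopologicalBasis B} :=
    ⟨⟨_, TopologicalSpace.isTopologicalBasis_opens⟩⟩
  obtain ⟨⟨B, hB⟩, hBw⟩ : ∃ B : {B : Set (Set X) // TopologicalSpace.IsTopologicalBasis B},
      #B.1 = tweight X := ciInf_mem _
  have hB' := hB.sdiff_empty
  let ι := (#(B \ {∅} : Set (Set X))).ord.ToType
  obtain ⟨e⟩ : Nonempty (ι ≃ (B \ {∅} : Set (Set X))) := Cardinal.eq.1 (mk_ord_toType _)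
  have hι (i : ι) : #(Iio i) < Module.rank ℝ (X ⧸ Y) := calc
    #(Iio i) < #ι := mk_Iio_lt i (by rw [mk_ord_toType, Ordinal.type_toType])
    _ = #(B \ {∅} : Set (Set X)) := mk_ord_toType _
    _ ≤ #B := mk_le_mk_of_subset sdiff_subset
    _ ≤ Module.rank ℝ (X ⧸ Y) := hBw ▸ h
  obtain ⟨F, hFU, hFli⟩ := exists_linearIndependent_comp_of_forall_mem Y.mkQ_surjective hι
    (U := fun i => (e i : Set X)) (fun i => hB'.isOpen (e i).2)
    (fun i => nonempty_iff_ne_empty.2 (e i).2.2)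
  refine ⟨span ℝ (range F), hB'.dense_iff.2 fun o ho _ =>
    ⟨F (e.symm ⟨o, ho⟩), ?_, subset_span (mem_range_self _)⟩, ?_⟩
  · simpa using hFU (e.symm ⟨o, ho⟩)
  · simpa [disjoint_iff] using range_ker_disjoint hFli
end

section
/- The set L(ω) of bounded real sequences with exactly countably infinitely many accumulation points is densely lineable in ℓ∞: there exists a dense linear subspace V of ℓ∞ such that every non-zero element of V has exactly countably infinitely many accumulation points. -/
/-!
Let `φ y n = 2^{-(j+1)} y i` when `n` encodes the triple `(i, j, k)`. As `‖φ‖ ≤ 1/2`, the operator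
`1 - φ` is invertible on `ℓ∞`, so it maps the dense subspace of finitely-valued sequences onto a
dense subspace `V`. Let `y ≠ 0` be finitely valued, `y i = a ≠ 0`, and `x = y - φ y`. Along the
indices encoding `(i, j, ·)`, `x` takes the values `y n - 2^{-(j+1)} a`, so by pigeonhole some
`c - 2^{-(j+1)} a` is an accumulation point of `x` for infinitely many `j`. On the other hand every
value of `x` lies in the compact countable set `{p - t q : p, q ∈ range y, t ∈ {0, 1/2, 1/4, …}}`,
which therefore contains all accumulation points.
-/

open Filter Topology Set

/-- The Banach space `ℓ∞` of bounded real sequences. -/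
noncomputable abbrev linf : Type := lp (fun _ : ℕ => ℝ) ⊤

theorem Set.Infinite.exists_infinite_inter_preimage_singleton {α β : Type*} {s : Set α}
    {f : α → β} (hs : s.Infinite) (hf : (f '' s).Finite) :
    ∃ b ∈ f '' s, (s ∩ f ⁻¹' {b}).Infinite := by
  by_contra! h
  exact hs <| (hf.biUnion h).subset fun a ha => mem_biUnion (mem_image_of_mem f ha) ⟨ha, rfl⟩

theorem mem_accPts_of_infinite_preimage {x : ℕ → ℝ} {η : ℝ} (h : (x ⁻¹' {η}).Infinite) :
    η ∈ AccPts x :=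
  fun ε hε => h.mono fun n (hn : x n = η) => by simpa [hn] using hε

theorem accPts_subset_closure_range (x : ℕ → ℝ) : AccPts x ⊆ closure (range x) := by
  intro η hη
  rw [Metric.mem_closure_iff]
  intro ε hε
  obtain ⟨n, hn⟩ := (hη ε hε).nonempty
  exact ⟨x n, mem_range_self n, by rwa [Real.dist_eq, abs_sub_comm]⟩

section PerturbedSequence

variable {y w : ℕ → ℝ} {σ : ℕ → ℕ}

theorem accPts_sub_mul_comp_infinite (hy : (range y).Finite) {u : ℕ → ℝ}
    (hu : Function.Injective u) {i : ℕ} (hi : y i ≠ 0)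
    (hfiber : ∀ j, {n | σ n = i ∧ w n = u j}.Infinite) :
    (AccPts fun n => y n - w n * y (σ n)).Infinite := by
  have hfin : ∀ j, (y '' {n | σ n = i ∧ w n = u j}).Finite :=
    fun j => hy.subset (image_subset_range _ _)
  choose b hb hb_inf using fun j => (hfiber j).exists_infinite_inter_preimage_singleton (hfin j)
  have hacc : ∀ j, b j - u j * y i ∈ AccPts fun n => y n - w n * y (σ n) := by
    refine fun j => mem_accPts_of_infinite_preimage ((hb_inf j).mono ?_)
    rintro n ⟨⟨hσ, hw⟩, hn⟩
    simp only [mem_preimage, mem_singleton_iff] at hn ⊢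
    rw [hσ, hw, hn]
  obtain ⟨c, -, hc⟩ := infinite_univ.exists_infinite_inter_preimage_singleton
    (hy.subset (by rintro _ ⟨j, -, rfl⟩; exact image_subset_range _ _ (hb j)) : (b '' univ).Finite)
  have hinj : InjOn (fun j => c - u j * y i) (univ ∩ b ⁻¹' {c}) :=
    fun j _ k _ h => hu (mul_right_cancel₀ hi (sub_right_injective h))
  refine (hc.image hinj).mono ?_
  rintro _ ⟨j, ⟨-, hj⟩, rfl⟩
  simpa [← show b j = c from hj] using hacc j

theorem accPts_sub_mul_comp_countable (hy : (range y).Finite) {K : Set ℝ} (hK : IsCompact K)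
    (hKc : K.Countable) (hw : ∀ n, w n ∈ K) :
    (AccPts fun n => y n - w n * y (σ n)).Countable := by
  let g : ℝ × ℝ × ℝ → ℝ := fun p => p.1 - p.2.2 * p.2.1
  have hrange : range (fun n => y n - w n * y (σ n)) ⊆ g '' (range y ×ˢ range y ×ˢ K) := by
    rintro _ ⟨n, rfl⟩
    exact ⟨(y n, y (σ n), w n), ⟨mem_range_self _, mem_range_self _, hw n⟩, rfl⟩
  have hcompact : IsCompact (g '' (range y ×ˢ range y ×ˢ K)) :=
    (hy.isCompact.prod (hy.isCompact.prod hK)).image (by fun_prop)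
  exact (((hy.countable.prod (hy.countable.prod hKc))).image g).mono <|
    (accPts_subset_closure_range _).trans (closure_minimal hrange hcompact.isClosed)

end PerturbedSequence

theorem memℓp_infty_of_finite_range {ι E : Type*} [NormedAddCommGroup E] {f : ι → E}
    (hf : (range f).Finite) : Memℓp f ⊤ :=
  memℓp_infty <| by rw [range_comp' norm f]; exact (hf.image _).bddAbove

theorem norm_apply_mul_apply_le (w y : linf) (m n : ℕ) : ‖w m * y n‖ ≤ ‖w‖ * ‖y‖ := by
  rw [norm_mul]
  exact mul_le_mul (lp.norm_apply_le_norm ENNReal.top_ne_zero w m)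
    (lp.norm_apply_le_norm ENNReal.top_ne_zero y n) (norm_nonneg _) (norm_nonneg _)

noncomputable def weightedComp (w : linf) (σ : ℕ → ℕ) : linf →L[ℝ] linf :=
  LinearMap.mkContinuous
    { toFun := fun y => ⟨fun n => w n * y (σ n), memℓp_infty ⟨‖w‖ * ‖y‖, by
          rintro _ ⟨n, rfl⟩
          exact norm_apply_mul_apply_le w y n (σ n)⟩⟩
      map_add' := fun y z => lp.ext <| funext fun n => mul_add _ _ _
      map_smul' := fun c y => lp.ext <| funext fun n => mul_left_comm _ _ _ }
    ‖w‖ fun y => lp.norm_le_of_forall_le (by positivity) fun n =>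
      norm_apply_mul_apply_le w y n (σ n)

theorem norm_weightedComp_le (w : linf) (σ : ℕ → ℕ) : ‖weightedComp w σ‖ ≤ ‖w‖ :=
  LinearMap.mkContinuous_norm_le _ (norm_nonneg w) _

theorem surjective_one_sub_weightedComp {w : linf} (hw : ‖w‖ < 1) (σ : ℕ → ℕ) :
    Function.Surjective ⇑(1 - weightedComp w σ) :=
  (ContinuousLinearMap.isUnit_iff_bijective.mp
    (isUnit_one_sub_of_norm_lt_one ((norm_weightedComp_le w σ).trans_lt hw))).2

def finiteValued : Submodule ℝ linf where
  carrier := {x | (range ⇑x).Finite}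
  zero_mem' := by
    show (range fun _ : ℕ => (0 : ℝ)).Finite
    exact finite_range_const
  add_mem' := by
    rintro x y hx hy
    refine (hx.image2 (· + ·) hy).subset ?_
    rintro _ ⟨n, rfl⟩
    exact mem_image2_of_mem (mem_range_self n) (mem_range_self n)
  smul_mem' := by
    rintro c x hx
    refine (hx.image (c * ·)).subset ?_
    rintro _ ⟨n, rfl⟩
    exact mem_image_of_mem _ (mem_range_self n)

theorem dense_finiteValued : Dense (finiteValued : Set linf) := by
  rw [Metric.dense_iff]
  intro z r hr
  set ε := r / 2 with hε_def
  have hε : 0 < ε := by positivity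
  let g : ℕ → ℝ := fun n => ε * ⌊z n / ε⌋
  have hg_close : ∀ n, |g n - z n| ≤ ε := fun n => by
    have hfract : g n - z n = -(ε * Int.fract (z n / ε)) := by
      rw [Int.fract, mul_sub, mul_div_cancel₀ _ hε.ne']; ring
    rw [hfract, abs_neg, abs_of_nonneg (by positivity)]
    exact mul_le_of_le_one_right hε.le (Int.fract_lt_one _).le
  have hg_range : (range g).Finite := by
    refine (((finite_Icc ⌊-‖z‖ / ε⌋ ⌊‖z‖ / ε⌋).image fun k : ℤ => ε * k)).subset ?_
    rintro _ ⟨n, rfl⟩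
    have hz := abs_le.mp ((Real.norm_eq_abs _).symm.trans_le
      (lp.norm_apply_le_norm ENNReal.top_ne_zero z n))
    exact ⟨_, ⟨Int.floor_mono (div_le_div_of_nonneg_right hz.1 hε.le),
      Int.floor_mono (div_le_div_of_nonneg_right hz.2 hε.le)⟩, rfl⟩
  refine ⟨⟨g, memℓp_infty_of_finite_range hg_range⟩, ?_, hg_range⟩
  rw [Metric.mem_ball, dist_eq_norm]
  exact (lp.norm_le_of_forall_le hε.le hg_close).trans_lt (by linarith)

theorem injective_inv_two_pow_succ : Function.Injective fun j : ℕ => (2 : ℝ)⁻¹ ^ (j + 1) :=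
  (pow_right_injective₀ (by norm_num) (by norm_num)).comp (add_left_injective 1)

theorem isCompact_insert_zero_range_inv_two_pow_succ :
    IsCompact (insert 0 (range fun j : ℕ => (2 : ℝ)⁻¹ ^ (j + 1))) :=
  ((tendsto_pow_atTop_nhds_zero_of_lt_one (by norm_num) (by norm_num)).comp
    (tendsto_add_atTop_nat 1)).isCompact_insert_range

theorem norm_inv_two_pow_succ_le (j : ℕ) : ‖(2 : ℝ)⁻¹ ^ (j + 1)‖ ≤ 2⁻¹ := by
  rw [Real.norm_of_nonneg (by positivity)]
  exact pow_le_of_le_one (by norm_num) (by norm_num) j.succ_ne_zero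

noncomputable def dyadicWeight : linf :=
  ⟨fun n => (2 : ℝ)⁻¹ ^ (n.unpair.2.unpair.1 + 1), memℓp_infty ⟨2⁻¹, by
    rintro _ ⟨n, rfl⟩
    exact norm_inv_two_pow_succ_le _⟩⟩

theorem norm_dyadicWeight_lt_one : ‖dyadicWeight‖ < 1 :=
  (lp.norm_le_of_forall_le (by norm_num) fun _ => norm_inv_two_pow_succ_le _).trans_lt
    (by norm_num)

theorem infinite_setOf_unpair_fst_eq_and_dyadicWeight_eq (i j : ℕ) :
    {n | n.unpair.1 = i ∧ dyadicWeight n = (2 : ℝ)⁻¹ ^ (j + 1)}.Infinite := by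
  have hinj : Function.Injective fun k => i.pair (j.pair k) :=
    fun k l h => (Nat.pair_eq_pair.mp (Nat.pair_eq_pair.mp h).2).2
  refine (infinite_range_of_injective hinj).mono ?_
  rintro _ ⟨k, rfl⟩
  exact ⟨by simp, by simp [dyadicWeight]⟩

theorem coe_one_sub_weightedComp_apply (w : linf) (σ : ℕ → ℕ) (y : linf) :
    ⇑((1 - weightedComp w σ) y) = fun n => y n - w n * y (σ n) := rfl

theorem stmt_8 :
    ∃ V : Submodule ℝ linf, Dense (V : Set linf) ∧
      ∀ x ∈ V, x ≠ 0 → (AccPts ⇑x).Infinite ∧ (AccPts ⇑x).Countable := by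
  refine ⟨finiteValued.map (1 - weightedComp dyadicWeight fun n => n.unpair.1).toLinearMap,
    ?_, ?_⟩
  · rw [Submodule.map_coe, ContinuousLinearMap.coe_coe]
    exact (surjective_one_sub_weightedComp norm_dyadicWeight_lt_one _).denseRange.dense_image
      (ContinuousLinearMap.continuous _) dense_finiteValued
  · rintro _ ⟨y, hy, rfl⟩ hx
    obtain ⟨i, hi⟩ : ∃ i, y i ≠ 0 := by
      by_contra! h
      exact hx (by rw [show y = 0 from lp.ext (funext h), map_zero])
    rw [ContinuousLinearMap.coe_coe, coe_one_sub_weightedComp_apply]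
    exact ⟨accPts_sub_mul_comp_infinite hy injective_inv_two_pow_succ hi
        (infinite_setOf_unpair_fst_eq_and_dyadicWeight_eq i),
      accPts_sub_mul_comp_countable hy isCompact_insert_zero_range_inv_two_pow_succ
        ((countable_range _).insert 0) fun _ => mem_insert_of_mem _ (mem_range_self _)⟩
end

section
/- There exists a family {f_q : q ∈ (0,1)} ⊆ ℓ∞ of linearly independent vectors such that every non-trivial finite linear combination of the f_q has exactly countably infinitely many accumulation points. Hence L(ω) is 𝔠-lineable. -/
open Filter Topology Set

def aSeq (n : ℕ) : ℕ := n.unpair.1 + 1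

lemma one_le_aSeq (n : ℕ) : 1 ≤ aSeq n := Nat.le_add_left 1 _

lemma aSeq_fiber_infinite {k : ℕ} (hk : 1 ≤ k) : {n | aSeq n = k}.Infinite := by
  apply Set.infinite_of_injective_forall_mem (f := fun m : ℕ => Nat.pair (k-1) m)
  · intro m1 m2 h
    exact (Nat.pair_eq_pair.mp h).2
  · intro m
    simp only [Set.mem_setOf_eq, aSeq, Nat.unpair_pair]
    omega

noncomputable def fq (q : Ioo (0:ℝ) 1) : lp (fun _ : ℕ => ℝ) ⊤ :=
  ⟨fun n => (q:ℝ) ^ aSeq n, memℓp_infty ⟨1, by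
    rintro - ⟨n, rfl⟩
    have h1 : (0:ℝ) ≤ (q:ℝ) := q.2.1.le
    have h2 : (q:ℝ) ≤ 1 := q.2.2.le
    simp only [Real.norm_eq_abs, abs_pow, abs_of_nonneg h1]
    exact pow_le_one₀ h1 h2⟩⟩

lemma fq_apply (q : Ioo (0:ℝ) 1) (n : ℕ) : (fq q : ℕ → ℝ) n = (q:ℝ) ^ aSeq n := rfl

lemma coe_sum (s : Finset (Ioo (0:ℝ) 1)) (c : Ioo (0:ℝ) 1 → ℝ) :
    ⇑(∑ q ∈ s, c q • fq q) = fun n => ∑ q ∈ s, c q * (q:ℝ) ^ aSeq n := by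
  rw [lp.coeFn_sum]
  funext n
  rw [Finset.sum_apply]
  refine Finset.sum_congr rfl fun q hq => ?_
  rw [lp.coeFn_smul, Pi.smul_apply, fq_apply, smul_eq_mul]

lemma accPts_key (s : Finset (Ioo (0:ℝ) 1)) (c : Ioo (0:ℝ) 1 → ℝ)
    (hs : s.Nonempty) (hc : ∀ q ∈ s, c q ≠ 0) :
    (AccPts (fun n => ∑ q ∈ s, c q * (q:ℝ) ^ aSeq n)).Infinite ∧
    (AccPts (fun n => ∑ q ∈ s, c q * (q:ℝ) ^ aSeq n)).Countable := by
  set g : ℕ → ℝ := fun k => ∑ q ∈ s, c q * (q:ℝ) ^ k with hgdef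
  set x : ℕ → ℝ := fun n => g (aSeq n) with hxdef
  -- g tends to 0
  have hg0 : Tendsto g atTop (𝓝 0) := by
    have h : ∀ q ∈ s, Tendsto (fun k => c q * (q:ℝ) ^ k) atTop (𝓝 0) := by
      intro q _
      simpa using (tendsto_pow_atTop_nhds_zero_of_lt_one q.2.1.le q.2.2).const_mul (c q)
    simpa using tendsto_finset_sum s h
  -- every g k (k ≥ 1) is an accumulation point
  have mem_acc : ∀ k, 1 ≤ k → g k ∈ AccPts x := by
    intro k hk ε hε
    apply (aSeq_fiber_infinite hk).mono
    intro n hn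
    simp only [Set.mem_setOf_eq] at hn ⊢
    simp [hxdef, hn, hε]
  -- g is eventually nonzero
  obtain ⟨K, hK⟩ : ∃ K, ∀ k ≥ K, g k ≠ 0 := by
    set q0 := s.max' hs with hq0def
    have hq0 : q0 ∈ s := s.max'_mem hs
    have hq0pos : (0:ℝ) < (q0:ℝ) := q0.2.1
    have hlt : ∀ q ∈ s.erase q0, (q:ℝ) < (q0:ℝ) := by
      intro q hq
      exact Subtype.coe_lt_coe.mpr (lt_of_le_of_ne (s.le_max' q (Finset.mem_of_mem_erase hq))
        (Finset.ne_of_mem_erase hq))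
    have htend : Tendsto (fun k => ∑ q ∈ s.erase q0, |c q| * ((q:ℝ)/(q0:ℝ)) ^ k)
        atTop (𝓝 0) := by
      have h : ∀ q ∈ s.erase q0,
          Tendsto (fun k => |c q| * ((q:ℝ)/(q0:ℝ)) ^ k) atTop (𝓝 0) := by
        intro q hq
        have h1 : (0:ℝ) ≤ (q:ℝ)/(q0:ℝ) := div_nonneg q.2.1.le hq0pos.le
        have h2 : (q:ℝ)/(q0:ℝ) < 1 := (div_lt_one hq0pos).mpr (hlt q hq)
        simpa using (tendsto_pow_atTop_nhds_zero_of_lt_one h1 h2).const_mul |c q|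
      simpa using tendsto_finset_sum _ h
    have hcq0 : (0:ℝ) < |c q0| := abs_pos.mpr (hc q0 hq0)
    obtain ⟨K, hK⟩ := (htend.eventually (gt_mem_nhds hcq0)).exists_forall_of_atTop
    refine ⟨K, fun k hk => ?_⟩
    have hrest : |∑ q ∈ s.erase q0, c q * (q:ℝ) ^ k| < |c q0 * (q0:ℝ) ^ k| := by
      calc |∑ q ∈ s.erase q0, c q * (q:ℝ) ^ k|
          ≤ ∑ q ∈ s.erase q0, |c q * (q:ℝ) ^ k| := Finset.abs_sum_le_sum_abs _ _
        _ = ∑ q ∈ s.erase q0, |c q| * ((q:ℝ)/(q0:ℝ)) ^ k * (q0:ℝ) ^ k := by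
            refine Finset.sum_congr rfl fun q hq => ?_
            rw [abs_mul, div_pow, abs_of_nonneg (pow_nonneg q.2.1.le k)]
            field_simp
        _ = (∑ q ∈ s.erase q0, |c q| * ((q:ℝ)/(q0:ℝ)) ^ k) * (q0:ℝ) ^ k := by
            rw [Finset.sum_mul]
        _ < |c q0| * (q0:ℝ) ^ k := by
            exact mul_lt_mul_of_pos_right (hK k hk) (pow_pos hq0pos k)
        _ = |c q0 * (q0:ℝ) ^ k| := by
            rw [abs_mul, abs_of_nonneg (pow_nonneg hq0pos.le k)]
    have hsum : g k = c q0 * (q0:ℝ) ^ k + ∑ q ∈ s.erase q0, c q * (q:ℝ) ^ k := by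
      rw [hgdef]
      exact (Finset.add_sum_erase s _ hq0).symm
    intro h0
    rw [hsum] at h0
    have : ∑ q ∈ s.erase q0, c q * (q:ℝ) ^ k = -(c q0 * (q0:ℝ) ^ k) := by linarith
    rw [this, abs_neg] at hrest
    exact lt_irrefl _ hrest
  -- Infinitude
  have hinf : (AccPts x).Infinite := by
    set K' := max K 1 with hK'def
    have himg : (g '' Ici K').Infinite := by
      intro hfin
      have hne : (g '' Ici K').Nonempty := ⟨g K', K', Set.self_mem_Ici, rfl⟩
      set T := hfin.toFinset with hT
      have hTne : T.Nonempty := by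
        rwa [hT, Set.Finite.toFinset_nonempty]
      set δ := (T.image fun t => |t|).min' (hTne.image _) with hδ
      have hδpos : 0 < δ := by
        rw [hδ, Finset.lt_min'_iff]
        intro b hb
        simp only [Finset.mem_image] at hb
        obtain ⟨t, ht, rfl⟩ := hb
        rw [hT, Set.Finite.mem_toFinset] at ht
        obtain ⟨k, hk, rfl⟩ := ht
        exact abs_pos.mpr (hK k (le_trans (le_max_left _ _) hk))
      obtain ⟨k, hball, hge⟩ :=
        ((hg0.eventually (Metric.ball_mem_nhds (0:ℝ) hδpos)).and (eventually_ge_atTop K')).exists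
      have hlt : |g k| < δ := by
        simpa [Real.dist_eq] using hball
      have : δ ≤ |g k| := by
        apply Finset.min'_le
        simp only [Finset.mem_image]
        exact ⟨g k, by rw [hT, Set.Finite.mem_toFinset]; exact ⟨k, hge, rfl⟩, rfl⟩
      linarith
    apply himg.mono
    rintro - ⟨k, hk, rfl⟩
    exact mem_acc k (le_trans (le_max_right _ _) hk)
  refine ⟨hinf, ?_⟩
  -- Countability: AccPts x ⊆ insert 0 (g '' {k | 1 ≤ k})
  have hsub : AccPts x ⊆ insert 0 (g '' {k | 1 ≤ k}) := by
    intro η hη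
    by_contra hmem
    simp only [Set.mem_insert_iff, Set.mem_image, Set.mem_setOf_eq, not_or, not_exists] at hmem
    obtain ⟨hη0, hηg⟩ := hmem
    have hηpos : 0 < |η| := abs_pos.mpr hη0
    obtain ⟨K2, hK2⟩ := (hg0.eventually
      (Metric.ball_mem_nhds (0:ℝ) (by positivity : (0:ℝ) < |η|/2))).exists_forall_of_atTop
    set F := insert (|η|/2) ((Finset.Icc 1 K2).image fun k => |g k - η|) with hF
    set ε := F.min' (Finset.insert_nonempty _ _) with hε
    have hεpos : 0 < ε := by
      rw [hε, Finset.lt_min'_iff]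
      intro b hb
      rw [hF, Finset.mem_insert] at hb
      rcases hb with rfl | hb
      · positivity
      · simp only [Finset.mem_image] at hb
        obtain ⟨k, hk, rfl⟩ := hb
        have : g k ≠ η := fun h => hηg k ⟨(Finset.mem_Icc.mp hk).1, h⟩
        exact abs_pos.mpr (sub_ne_zero.mpr this)
    have hεle : ∀ k, 1 ≤ k → ε ≤ |g k - η| := by
      intro k hk1
      rcases le_or_gt k K2 with hk2 | hk2
      · apply Finset.min'_le
        rw [hF, Finset.mem_insert]
        right
        exact Finset.mem_image.mpr ⟨k, Finset.mem_Icc.mpr ⟨hk1, hk2⟩, rfl⟩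
      · have h1 : ε ≤ |η|/2 := Finset.min'_le _ _ (Finset.mem_insert_self _ _)
        have h2 : |g k| < |η|/2 := by
          have := hK2 k hk2.le
          simpa [Real.dist_eq] using this
        have : |η| - |g k| ≤ |g k - η| := by
          have := abs_sub_abs_le_abs_sub η (g k)
          rw [abs_sub_comm] at this
          linarith
        linarith
    have := hη ε hεpos
    apply this.nonempty.elim
    intro n hn
    simp only [Set.mem_setOf_eq] at hn
    exact absurd hn (not_lt.mpr (hεle (aSeq n) (one_le_aSeq n)))
  apply Set.Countable.mono hsub
  exact Set.Countable.insert _ (Set.Countable.image (Set.to_countable _) g)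


lemma accPts_zero : AccPts (fun _ => (0:ℝ)) ⊆ {0} := by
  intro η hη
  by_contra h0
  have hpos : 0 < |η| := abs_pos.mpr h0
  have := (hη |η| hpos).nonempty
  obtain ⟨n, hn⟩ := this
  simp only [Set.mem_setOf_eq, zero_sub, abs_neg] at hn
  exact lt_irrefl _ hn

lemma key' (s : Finset (Ioo (0:ℝ) 1)) (c : Ioo (0:ℝ) 1 → ℝ)
    (hs : s.Nonempty) (hc : ∀ q ∈ s, c q ≠ 0) :
    (AccPts ⇑(∑ q ∈ s, c q • fq q)).Infinite ∧ (AccPts ⇑(∑ q ∈ s, c q • fq q)).Countable := by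
  rw [coe_sum]
  exact accPts_key s c hs hc

lemma fq_li : LinearIndependent ℝ fq := by
  rw [linearIndependent_iff]
  intro l hl
  by_contra hl0
  have hsupp : l.support.Nonempty := Finsupp.support_nonempty_iff.mpr hl0
  have hsum : ∑ q ∈ l.support, l q • fq q = 0 := by
    rwa [Finsupp.linearCombination_apply, Finsupp.sum] at hl
  have h := (key' l.support l hsupp (fun q hq => Finsupp.mem_support_iff.mp hq)).1
  rw [hsum] at h
  have : AccPts ⇑(0 : linf) ⊆ {0} := by
    have h0 : ⇑(0 : linf) = fun _ => (0:ℝ) := by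
      rw [lp.coeFn_zero]; rfl
    rw [h0]
    exact accPts_zero
  exact (Set.Finite.subset (Set.finite_singleton 0) this).not_infinite h

theorem stmt_9 :
    (∃ f : Set.Ioo (0 : ℝ) 1 → linf, LinearIndependent ℝ f ∧
      ∀ (s : Finset (Set.Ioo (0 : ℝ) 1)) (c : Set.Ioo (0 : ℝ) 1 → ℝ),
        s.Nonempty → (∀ q ∈ s, c q ≠ 0) →
          (AccPts ⇑(∑ q ∈ s, c q • f q)).Infinite ∧ (AccPts ⇑(∑ q ∈ s, c q • f q)).Countable) ∧
    ∃ V : Submodule ℝ linf, Module.rank ℝ V = Cardinal.continuum ∧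
      ∀ x ∈ V, x ≠ 0 → (AccPts ⇑x).Infinite ∧ (AccPts ⇑x).Countable := by
  refine ⟨⟨fq, fq_li, fun s c hs hc => key' s c hs hc⟩, Submodule.span ℝ (Set.range fq), ?_, ?_⟩
  · rw [rank_span fq_li, Cardinal.mk_range_eq _ fq_li.injective, Cardinal.mk_Ioo_real zero_lt_one]
  · intro x hx hx0
    rw [Finsupp.mem_span_range_iff_exists_finsupp] at hx
    obtain ⟨l, hl⟩ := hx
    have hsupp : l.support.Nonempty := by
      rw [Finsupp.support_nonempty_iff]
      rintro rfl
      simp at hl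
      exact hx0 hl.symm
    have hsum : x = ∑ q ∈ l.support, l q • fq q := by
      rw [← hl, Finsupp.sum]
    rw [hsum]
    exact key' l.support l hsupp (fun q hq => Finsupp.mem_support_iff.mp hq)
end

section
/- The set of bounded non-convergent real sequences having finitely many accumulation points, i.e. ⋃_{2 ≤ n < ω} L(n), is densely lineable in ℓ∞: there is a dense linear subspace V of ℓ∞ such that every non-zero vector of V is a non-convergent sequence with finitely many accumulation points. -/
open Filter Topology Set

namespace Stmt10

open Cardinal Submodule


open Cardinal Submodule

/-- Finite-range sequences. -/
def FR : Submodule ℝ (ℕ → ℝ) where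
  carrier := {x | (Set.range x).Finite}
  add_mem' := by
    intro a b ha hb
    exact ((ha.image2 (· + ·) hb).subset (by rintro - ⟨n, rfl⟩; exact ⟨a n, ⟨n, rfl⟩, b n, ⟨n, rfl⟩, rfl⟩))
  zero_mem' := (Set.finite_singleton (0:ℝ)).subset (by rintro - ⟨n, rfl⟩; simp)
  smul_mem' := by
    intro c x hx
    exact (hx.image (c * ·)).subset (by rintro - ⟨n, rfl⟩; exact ⟨x n, ⟨n, rfl⟩, rfl⟩)

/-- Eventually constant sequences. -/
def EC : Submodule ℝ (ℕ → ℝ) where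
  carrier := {x | ∃ c : ℝ, ∀ᶠ n in atTop, x n = c}
  add_mem' := by
    rintro a b ⟨c, hc⟩ ⟨d, hd⟩
    exact ⟨c + d, by filter_upwards [hc, hd] with n h1 h2; simp [h1, h2]⟩
  zero_mem' := ⟨0, Eventually.of_forall fun _ => rfl⟩
  smul_mem' := by
    rintro t x ⟨c, hc⟩
    exact ⟨t * c, by filter_upwards [hc] with n h; simp [h]⟩

lemma main_pt (x : ℕ → ℝ) (hfr : x ∈ FR) (hec : x ∉ EC) :
    (AccPts x).Finite ∧ ¬ ∃ a : ℝ, Tendsto x atTop (𝓝 a) := by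
  have hfin : (Set.range x).Finite := hfr
  constructor
  · refine hfin.subset ?_
    intro η hη
    by_contra hmem
    set F := hfin.toFinset with hF
    have hne : F.Nonempty := by
      exact ⟨x 0, by simp [hF]⟩
    set ε := F.inf' hne (fun v => |v - η|) with hε
    have hpos : 0 < ε := by
      rw [hε, Finset.lt_inf'_iff]
      intro v hv
      have : v ≠ η := by
        rintro rfl
        exact hmem (by simpa [hF] using hv)
      exact abs_pos.mpr (sub_ne_zero.mpr this)
    have := hη ε hpos
    refine this.nonempty.elim ?_
    rintro n hn
    have hxn : x n ∈ F := by simp [hF]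
    have : ε ≤ |x n - η| := Finset.inf'_le _ hxn
    simp only [Set.mem_setOf_eq] at hn
    linarith
  · rintro ⟨a, ha⟩
    set s := hfin.toFinset.filter (· ≠ a) with hs
    rcases s.eq_empty_or_nonempty with h | h
    · refine hec ⟨a, Eventually.of_forall fun n => ?_⟩
      by_contra hne
      have : x n ∈ s := by simp [hs, hne]
      simp [h] at this
    · set ε := s.inf' h (fun v => |v - a|) with hε
      have hpos : 0 < ε := by
        rw [hε, Finset.lt_inf'_iff]
        intro v hv
        have : v ≠ a := by
          simp [hs] at hv
          exact hv.2
        exact abs_pos.mpr (sub_ne_zero.mpr this)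
      have hev : ∀ᶠ n in atTop, x n ∈ Metric.ball a ε := ha (Metric.ball_mem_nhds a hpos)
      refine hec ⟨a, ?_⟩
      filter_upwards [hev] with n hn
      by_contra hne
      have hmem : x n ∈ s := by simp [hs, hne]
      have : ε ≤ |x n - a| := Finset.inf'_le _ hmem
      rw [Metric.mem_ball, Real.dist_eq] at hn
      linarith


lemma FR_def (x : ℕ → ℝ) : x ∈ FR ↔ (Set.range x).Finite := Iff.rfl

lemma EC_def (x : ℕ → ℝ) : x ∈ EC ↔ ∃ c : ℝ, ∀ᶠ n in atTop, x n = c := Iff.rfl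


open scoped Classical in
/-- injectively encode `(n, S ∩ [0,n))` -/
noncomputable def gfun (S : Set ℕ) (n : ℕ) : ℕ :=
  Nat.pair n (Encodable.encode ((Finset.range n).filter (· ∈ S)))

lemma gfun_inj (S : Set ℕ) : Function.Injective (gfun S) := by
  intro a b h
  exact (Nat.pair_eq_pair.mp h).1

noncomputable def ADF (S : Set ℕ) : Set ℕ := Set.range (gfun S)

lemma ADF_infinite (S : Set ℕ) : (ADF S).Infinite :=
  Set.infinite_range_of_injective (gfun_inj S)

lemma ADF_almost_disjoint {S T : Set ℕ} (h : S ≠ T) : (ADF S ∩ ADF T).Finite := by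
  classical
  have : ∃ k, ¬(k ∈ S ↔ k ∈ T) := by
    by_contra hall
    push_neg at hall
    exact h (Set.ext fun k => (hall k))
  obtain ⟨k, hk⟩ := this
  refine (Set.Finite.image (gfun S) (Set.finite_Iic k)).subset ?_
  intro m hm
  obtain ⟨h1, h2⟩ := hm
  obtain ⟨n, rfl⟩ := h1
  obtain ⟨n', hn'⟩ := h2
  have hnn : n' = n := (Nat.pair_eq_pair.mp hn').1
  rw [hnn] at hn'
  have henc := (Nat.pair_eq_pair.mp hn').2
  have hfe : (Finset.range n).filter (· ∈ T) = (Finset.range n).filter (· ∈ S) :=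
    Encodable.encode_injective henc
  refine ⟨n, ?_, rfl⟩
  simp only [Set.mem_Iic]
  by_contra hkn
  push_neg at hkn
  have hkmem : k ∈ Finset.range n := Finset.mem_range.mpr hkn
  apply hk
  constructor
  · intro hS
    have : k ∈ (Finset.range n).filter (· ∈ S) := Finset.mem_filter.mpr ⟨hkmem, hS⟩
    rw [← hfe] at this
    exact (Finset.mem_filter.mp this).2
  · intro hT
    have : k ∈ (Finset.range n).filter (· ∈ T) := Finset.mem_filter.mpr ⟨hkmem, hT⟩
    rw [hfe] at this
    exact (Finset.mem_filter.mp this).2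

open scoped Classical in
noncomputable def chi (A : Set ℕ) : ℕ → ℝ := fun n => if n ∈ A then 1 else 0

lemma chi_li : LinearIndependent ℝ (fun S : Set ℕ => chi (ADF S)) := by
  classical
  rw [linearIndependent_iff']
  intro s g hsum i hi
  have hBfin : (⋃ j ∈ s.erase i, (ADF i ∩ ADF j)).Finite := by
    refine Set.Finite.biUnion (s.erase i).finite_toSet ?_
    intro j hj
    exact ADF_almost_disjoint (Finset.ne_of_mem_erase hj).symm
  obtain ⟨n, hnA, hnB⟩ := ((ADF_infinite i).diff hBfin).nonempty
  have := congrFun hsum n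
  simp only [Finset.sum_apply, Pi.smul_apply, smul_eq_mul, Pi.zero_apply] at this
  rw [Finset.sum_eq_single_of_mem i hi] at this
  · simpa [chi, hnA] using this
  · intro j hj hne
    have hnAj : n ∉ ADF j := by
      intro hmem
      exact hnB (Set.mem_biUnion (Finset.mem_erase.mpr ⟨hne, hj⟩) ⟨hnA, hmem⟩)
    simp [chi, hnAj]


open scoped Classical in
lemma chi_def (A : Set ℕ) (n : ℕ) : chi A n = if n ∈ A then 1 else 0 := rfl

lemma chi_mem_FR (A : Set ℕ) : chi A ∈ FR := by
  rw [FR_def]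
  classical
  refine ((Set.finite_singleton (0:ℝ)).insert 1).subset ?_
  rintro - ⟨n, rfl⟩
  rw [chi_def]
  split <;> simp

lemma abs_chi_le (A : Set ℕ) (n : ℕ) : |chi A n| ≤ 1 := by
  classical
  rw [chi_def]; split <;> simp

lemma round_lemma (z : ℕ → ℝ) (C : ℝ) (hz : ∀ n, |z n| ≤ C) {δ : ℝ} (hδ : 0 < δ) :
    ∃ r : ℕ → ℝ, r ∈ FR ∧ ∀ n, |z n - r n| ≤ δ := by
  refine ⟨fun n => δ * ⌊z n / δ⌋, ?_, ?_⟩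
  · rw [FR_def]
    set K : ℤ := ⌈C / δ⌉ + 1 with hK
    refine ((Set.finite_Icc (-K) K).image (fun k : ℤ => δ * k)).subset ?_
    rintro - ⟨n, rfl⟩
    refine ⟨⌊z n / δ⌋, ?_, rfl⟩
    have hzn := abs_le.mp (hz n)
    constructor
    · rw [Int.le_floor]
      have hle : -C / δ ≤ z n / δ := (div_le_div_iff_of_pos_right hδ).mpr hzn.1
      have hceil : (C / δ : ℝ) ≤ (⌈C / δ⌉ : ℝ) := Int.le_ceil _
      have hneg : (-C) / δ = -(C / δ) := by ring
      rw [hK]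
      push_cast
      rw [hneg] at hle
      linarith
    · have hle : z n / δ ≤ C / δ := (div_le_div_iff_of_pos_right hδ).mpr hzn.2
      calc ⌊z n / δ⌋ ≤ ⌊C / δ⌋ := Int.floor_le_floor hle
        _ ≤ ⌈C / δ⌉ := Int.floor_le_ceil _
        _ ≤ K := by omega
  · intro n
    have h1 : (⌊z n / δ⌋ : ℝ) ≤ z n / δ := Int.floor_le _
    have h2 : z n / δ < ⌊z n / δ⌋ + 1 := Int.lt_floor_add_one _
    have hzn : z n = δ * (z n / δ) := by field_simp
    rw [abs_le]
    constructor <;> nlinarith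


/-- generators of the eventually-constant subspace -/
noncomputable def ecgens : Set (ℕ → ℝ) :=
  {fun _ => (1:ℝ)} ∪ Set.range (fun n => Pi.single n (1:ℝ))

lemma ecgens_countable : ecgens.Countable :=
  (Set.countable_singleton _).union (Set.countable_range _)

lemma EC_le_span : EC ≤ Submodule.span ℝ ecgens := by
  intro x hx
  obtain ⟨c, hc⟩ := (EC_def x).mp hx
  obtain ⟨N, hN⟩ := eventually_atTop.mp hc
  have hrepr : x = c • (fun _ => (1:ℝ)) +
      ∑ n ∈ Finset.range N, (x n - c) • (Pi.single n (1:ℝ) : ℕ → ℝ) := by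
    classical
    funext m
    simp only [Pi.add_apply, Pi.smul_apply, smul_eq_mul, mul_one, Finset.sum_apply,
      Pi.single_apply, mul_ite, mul_zero, mul_one]
    rw [Finset.sum_ite_eq (Finset.range N) m (fun n => x n - c)]
    by_cases hm : m < N
    · simp [Finset.mem_range.mpr hm]
    · have hmN : ¬ m ∈ Finset.range N := by simp [Finset.mem_range]; omega
      push_neg at hm
      simp [hmN, hN m hm]
  rw [hrepr]
  refine add_mem (smul_mem _ _ (subset_span (Or.inl rfl))) (sum_mem fun n _ => smul_mem _ _ (subset_span (Or.inr ⟨n, rfl⟩)))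

lemma exists_good (z : ℕ → ℝ) (C : ℝ) (hz : ∀ n, |z n| ≤ C) {ε : ℝ} (hε : 0 < ε)
    (P : Set (ℕ → ℝ)) (hP : #P < Cardinal.continuum) :
    ∃ f : ℕ → ℝ, f ∈ FR ∧ (∀ n, |z n - f n| ≤ ε) ∧ f ∉ Submodule.span ℝ P ⊔ EC := by
  have hδ : 0 < ε / 2 := by linarith
  obtain ⟨r, hrFR, hr⟩ := round_lemma z C hz hδ
  by_contra hcon
  push_neg at hcon
  set G : Set (ℕ → ℝ) := P ∪ ecgens ∪ {r} with hG
  have hchi : ∀ S : Set ℕ, chi (ADF S) ∈ Submodule.span ℝ G := by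
    intro S
    set f : ℕ → ℝ := r + (ε / 2) • chi (ADF S) with hf
    have h1 : f ∈ FR := add_mem hrFR (smul_mem _ _ (chi_mem_FR _))
    have h2 : ∀ n, |z n - f n| ≤ ε := by
      intro n
      have := hr n
      have h3 : |(ε / 2) * chi (ADF S) n| ≤ ε / 2 := by
        rw [abs_mul, abs_of_pos hδ]
        have := abs_chi_le (ADF S) n
        nlinarith
      have : |z n - f n| = |(z n - r n) - (ε/2) * chi (ADF S) n| := by
        rw [hf]; simp [Pi.add_apply]; ring_nf
      rw [this]
      calc |(z n - r n) - (ε/2) * chi (ADF S) n| ≤ |z n - r n| + |(ε/2) * chi (ADF S) n| :=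
            abs_sub _ _
        _ ≤ ε / 2 + ε / 2 := add_le_add (hr n) h3
        _ = ε := by ring
    have hmem : f ∈ Submodule.span ℝ P ⊔ EC := hcon f h1 h2
    have hle : Submodule.span ℝ P ⊔ EC ≤ Submodule.span ℝ G := by
      apply sup_le
      · exact span_mono (by intro a ha; exact Or.inl (Or.inl ha))
      · exact le_trans EC_le_span (span_mono (by intro a ha; exact Or.inl (Or.inr ha)))
    have hrG : r ∈ Submodule.span ℝ G := subset_span (Or.inr rfl)
    have : (ε / 2) • chi (ADF S) ∈ Submodule.span ℝ G := by
      have := sub_mem (hle hmem) hrG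
      simpa [hf] using this
    have := smul_mem (Submodule.span ℝ G) (ε / 2)⁻¹ this
    rwa [smul_smul, inv_mul_cancel₀ (ne_of_gt hδ), one_smul] at this
  -- cardinality contradiction
  have hli : LinearIndependent ℝ (fun S : Set ℕ =>
      (⟨chi (ADF S), hchi S⟩ : Submodule.span ℝ G)) := by
    apply LinearIndependent.of_comp (Submodule.span ℝ G).subtype
    exact chi_li
  have hbig : Cardinal.continuum ≤ Module.rank ℝ (Submodule.span ℝ G) := by
    have := hli.cardinal_le_rank
    rwa [Cardinal.mk_set, Cardinal.mk_nat, Cardinal.two_power_aleph0] at this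
  have hsmall : Module.rank ℝ (Submodule.span ℝ G) < Cardinal.continuum := by
    refine lt_of_le_of_lt (rank_span_le G) ?_
    have h1 : #G ≤ #(P ∪ ecgens : Set (ℕ → ℝ)) + #({r} : Set (ℕ → ℝ)) := mk_union_le _ _
    have h2 : #(P ∪ ecgens : Set (ℕ → ℝ)) ≤ #P + #ecgens := mk_union_le _ _
    have h3 : #ecgens ≤ ℵ₀ := ecgens_countable.le_aleph0
    have h4 : #({r} : Set (ℕ → ℝ)) = 1 := mk_singleton r
    have hPe : #(P ∪ ecgens : Set (ℕ → ℝ)) < Cardinal.continuum :=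
      lt_of_le_of_lt h2 (Cardinal.add_lt_of_lt aleph0_le_continuum hP
        (lt_of_le_of_lt h3 aleph0_lt_continuum))
    refine lt_of_le_of_lt h1 ?_
    rw [h4]
    exact Cardinal.add_lt_of_lt aleph0_le_continuum hPe (lt_of_lt_of_le one_lt_aleph0 aleph0_le_continuum)
  exact absurd (lt_of_le_of_lt hbig hsmall) (lt_irrefl _)


noncomputable def kap : Cardinal := #(linf × ℕ)

abbrev Sig : Type := kap.ord.ToType

lemma mk_Sig : #Sig = kap := by rw [Cardinal.mk_toType, Cardinal.card_ord]

noncomputable def eqv : Sig ≃ linf × ℕ :=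
  Classical.choice (Cardinal.eq.mp (mk_Sig.trans rfl))

lemma mk_linf_le : #linf ≤ Cardinal.continuum := by
  have h1 : #linf ≤ #(ℕ → ℝ) :=
    Cardinal.mk_le_of_injective (f := fun x : linf => (x : ℕ → ℝ))
      (fun a b h => lp.ext h)
  have h2 : #(ℕ → ℝ) = Cardinal.continuum := by
    rw [Cardinal.mk_arrow]
    simp [Cardinal.mk_real, Cardinal.mk_nat, Cardinal.continuum_power_aleph0]
  rwa [h2] at h1

lemma kap_le : kap ≤ Cardinal.continuum := by
  rw [kap, Cardinal.mk_prod]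
  simp only [Cardinal.lift_id]
  calc #linf * #ℕ ≤ Cardinal.continuum * Cardinal.continuum :=
        mul_le_mul' mk_linf_le (by rw [Cardinal.mk_nat]; exact aleph0_le_continuum)
    _ = Cardinal.continuum := Cardinal.mul_eq_self aleph0_le_continuum

lemma mk_Iio_lt (i : Sig) : #(Set.Iio i) < Cardinal.continuum :=
  lt_of_lt_of_le (Cardinal.mk_Iio_ord_toType i) kap_le

noncomputable def zf (i : Sig) : linf := (eqv i).1
noncomputable def mf (i : Sig) : ℕ := (eqv i).2
noncomputable def epsf (i : Sig) : ℝ := 1 / ((mf i : ℝ) + 1)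

lemma epsf_pos (i : Sig) : 0 < epsf i := by
  rw [epsf]; positivity

lemma zf_bound (i : Sig) (n : ℕ) : |(zf i : ℕ → ℝ) n| ≤ ‖zf i‖ := by
  have h := lp.norm_apply_le_norm (ENNReal.top_ne_zero) (zf i) n
  rw [Real.norm_eq_abs] at h
  exact h

noncomputable def body (i : Sig) (rec : ∀ j : Sig, j < i → (ℕ → ℝ)) : ℕ → ℝ :=
  Classical.choose (exists_good (⇑(zf i)) ‖zf i‖ (zf_bound i) (epsf_pos i)
    (Set.range (fun j : Set.Iio i => rec j j.2))
    (lt_of_le_of_lt Cardinal.mk_range_le (mk_Iio_lt i)))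

noncomputable def wfun : Sig → ℕ → ℝ :=
  WellFounded.fix (IsWellFounded.wf (r := ((· < ·) : Sig → Sig → Prop))) body

lemma wfun_spec (i : Sig) :
    wfun i ∈ FR ∧ (∀ n, |(zf i : ℕ → ℝ) n - wfun i n| ≤ epsf i) ∧
      wfun i ∉ Submodule.span ℝ (Set.range (fun j : Set.Iio i => wfun ↑j)) ⊔ EC := by
  have h := WellFounded.fix_eq
    (IsWellFounded.wf (r := ((· < ·) : Sig → Sig → Prop))) body i
  have heq : wfun i = body i (fun j _ => wfun j) := h
  rw [heq, body]
  exact Classical.choose_spec (exists_good (⇑(zf i)) ‖zf i‖ (zf_bound i) (epsf_pos i)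
    (Set.range (fun j : Set.Iio i => wfun ↑j))
    (lt_of_le_of_lt Cardinal.mk_range_le (mk_Iio_lt i)))

noncomputable def V' : Submodule ℝ (ℕ → ℝ) := Submodule.span ℝ (Set.range wfun)

lemma V'_le_FR : V' ≤ FR := by
  rw [V', span_le]
  rintro - ⟨i, rfl⟩
  exact (wfun_spec i).1

lemma V'_inter_EC {v : ℕ → ℝ} (hv : v ∈ V') (hec : v ∈ EC) : v = 0 := by
  rw [V', Finsupp.mem_span_range_iff_exists_finsupp] at hv
  obtain ⟨c, hc⟩ := hv
  by_contra hv0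
  have hsupp : c.support.Nonempty := by
    rcases Finset.eq_empty_or_nonempty c.support with h | h
    · have hc0 : c = 0 := Finsupp.support_eq_empty.mp h
      rw [hc0] at hc
      simp at hc
      exact (hv0 hc.symm).elim
    · exact h
  set i0 := c.support.max' hsupp with hi0def
  have hi0 : c i0 ≠ 0 := Finsupp.mem_support_iff.mp (c.support.max'_mem hsupp)
  set M := Submodule.span ℝ (Set.range (fun j : Set.Iio i0 => wfun ↑j)) ⊔ EC with hM
  have hrest : ∑ i ∈ c.support.erase i0, c i • wfun i ∈ M := by
    refine sum_mem fun j hj => ?_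
    have hjlt : j < i0 :=
      lt_of_le_of_ne (Finset.le_max' _ _ (Finset.mem_of_mem_erase hj))
        (Finset.ne_of_mem_erase hj)
    exact smul_mem _ _ ((le_sup_left : _ ≤ M) (subset_span ⟨⟨j, hjlt⟩, rfl⟩))
  have hsum : c i0 • wfun i0 + ∑ i ∈ c.support.erase i0, c i • wfun i = v := by
    rw [← hc]
    rw [Finsupp.sum]
    have hmemi0 : i0 ∈ c.support := by rw [hi0def]; exact c.support.max'_mem hsupp
    exact Finset.add_sum_erase c.support (fun i => c i • wfun i) hmemi0
  have hmain : c i0 • wfun i0 ∈ M := by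
    have h1 : c i0 • wfun i0 = v - ∑ i ∈ c.support.erase i0, c i • wfun i := by
      rw [← hsum]; ring
    rw [h1]
    exact sub_mem ((le_sup_right : EC ≤ M) hec) hrest
  have hfin : wfun i0 ∈ M := by
    have h2 := smul_mem M (c i0)⁻¹ hmain
    rwa [smul_smul, inv_mul_cancel₀ hi0, one_smul] at h2
  exact (wfun_spec i0).2.2 hfin

noncomputable def coeL : linf →ₗ[ℝ] (ℕ → ℝ) where
  toFun x := ⇑x
  map_add' := lp.coeFn_add
  map_smul' c x := lp.coeFn_smul c x

noncomputable def V : Submodule ℝ linf := V'.comap coeL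

lemma V_dense : Dense (V : Set linf) := by
  rw [Metric.dense_iff]
  intro x r hr
  obtain ⟨m, hm⟩ := exists_nat_one_div_lt hr
  set i := eqv.symm (x, m) with hidef
  have hei : eqv i = (x, m) := Equiv.apply_symm_apply _ _
  have hz : zf i = x := by rw [zf, hei]
  have hmf : mf i = m := by rw [mf, hei]
  obtain ⟨hFR, happrox, -⟩ := wfun_spec i
  set w := wfun i with hw
  have hwfin : (Set.range w).Finite := (FR_def w).mp hFR
  have hbdd : BddAbove (Set.range fun n => ‖w n‖) := by
    refine Set.Finite.bddAbove ((hwfin.image norm).subset ?_)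
    rintro - ⟨n, rfl⟩
    exact ⟨w n, ⟨n, rfl⟩, rfl⟩
  have hmem : Memℓp w ⊤ := memℓp_infty hbdd
  set v : linf := ⟨w, hmem⟩ with hv
  have happ : ∀ n, |(x : ℕ → ℝ) n - w n| ≤ 1 / ((m : ℝ) + 1) := by
    intro n
    have := happrox n
    rwa [hz, epsf, hmf] at this
  refine ⟨v, Metric.mem_ball.mpr ?_, ?_⟩
  · rw [dist_eq_norm]
    have hle : ‖v - x‖ ≤ 1 / ((m : ℝ) + 1) := by
      refine lp.norm_le_of_forall_le (by positivity) fun n => ?_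
      have hcoe : (⇑(v - x) : ℕ → ℝ) n = w n - (x : ℕ → ℝ) n := by
        rw [lp.coeFn_sub]; rfl
      rw [Real.norm_eq_abs, hcoe, abs_sub_comm]
      exact happ n
    linarith
  · show v ∈ V
    rw [V, Submodule.mem_comap]
    exact subset_span ⟨i, rfl⟩

theorem final :
    ∃ W : Submodule ℝ linf, Dense (W : Set linf) ∧
      ∀ x ∈ W, x ≠ 0 →
        (AccPts ⇑x).Finite ∧ ¬ ∃ a : ℝ, Tendsto ⇑x atTop (𝓝 a) := by
  refine ⟨V, V_dense, ?_⟩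
  intro x hx hx0
  have hxV' : (⇑x : ℕ → ℝ) ∈ V' := hx
  have hFR : (⇑x : ℕ → ℝ) ∈ FR := V'_le_FR hxV'
  have hEC : (⇑x : ℕ → ℝ) ∉ EC := by
    intro h
    have h0 : (⇑x : ℕ → ℝ) = 0 := V'_inter_EC hxV' h
    exact hx0 (lp.ext (by rw [h0]; exact (lp.coeFn_zero _ _).symm))
  exact main_pt _ hFR hEC


end Stmt10

theorem stmt_10 :
    ∃ V : Submodule ℝ linf, Dense (V : Set linf) ∧
      ∀ x ∈ V, x ≠ 0 →
        (AccPts ⇑x).Finite ∧ ¬ ∃ a : ℝ, Tendsto ⇑x atTop (𝓝 a) := by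
  exact Stmt10.final
end

section
/- Let x ∈ ℓ∞ have finitely many accumulation points. Then there exists ε > 0 such that for every y ∈ ℓ∞ with finitely many accumulation points and ‖y‖_∞ < ε, the sequence x + y has at least max{|L_x|, |L_y|} accumulation points. -/
open Filter Topology Set

lemma accPts_iff {z : ℕ → ℝ} {a : ℝ} : a ∈ AccPts z ↔ MapClusterPt a atTop z := by
  rw [Metric.nhds_basis_ball.mapClusterPt_iff_frequently]
  constructor
  · intro h ε hε
    rw [Nat.frequently_atTop_iff_infinite]
    simpa [Metric.mem_ball, Real.dist_eq] using h ε hε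
  · intro h ε hε
    have := h ε hε
    rw [Nat.frequently_atTop_iff_infinite] at this
    simpa [Metric.mem_ball, Real.dist_eq] using this

lemma accPts_of_subseq {z : ℕ → ℝ} {a : ℝ} {φ : ℕ → ℕ} (hφ : StrictMono φ)
    (h : Tendsto (fun k => z (φ k)) atTop (𝓝 a)) : a ∈ AccPts z := by
  rw [accPts_iff]
  exact MapClusterPt.of_comp hφ.tendsto_atTop h.mapClusterPt

lemma subseq_of_accPts {z : ℕ → ℝ} {a : ℝ} (h : a ∈ AccPts z) :
    ∃ φ : ℕ → ℕ, StrictMono φ ∧ Tendsto (fun k => z (φ k)) atTop (𝓝 a) :=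
  TopologicalSpace.FirstCountableTopology.tendsto_subseq (accPts_iff.mp h)

lemma bw {z : ℕ → ℝ} {C : ℝ} (hz : ∀ n, |z n| ≤ C) :
    ∃ a, ∃ φ : ℕ → ℕ, StrictMono φ ∧ Tendsto (fun k => z (φ k)) atTop (𝓝 a) := by
  obtain ⟨a, -, φ, hφ, h⟩ := tendsto_subseq_of_bounded (Metric.isBounded_Icc (-C) C)
    (x := z) (fun n => by simpa [Set.mem_Icc, ← abs_le] using hz n)
  exact ⟨a, φ, hφ, h⟩

lemma exists_sep {L : Set ℝ} (hL : L.Finite) :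
    ∃ ε > (0 : ℝ), ∀ a ∈ L, ∀ b ∈ L, a ≠ b → 3 * ε ≤ |a - b| := by
  by_cases h : ∃ a ∈ L, ∃ b ∈ L, a ≠ b
  · have hT : {d : ℝ | ∃ a ∈ L, ∃ b ∈ L, a ≠ b ∧ d = |a - b|}.Finite := by
      apply ((hL.prod hL).image (fun p : ℝ × ℝ => |p.1 - p.2|)).subset
      rintro d ⟨a, ha, b, hb, -, rfl⟩
      exact ⟨(a, b), ⟨ha, hb⟩, rfl⟩
    obtain ⟨a, ha, b, hb, hab⟩ := h
    have hmem : |a - b| ∈ hT.toFinset := by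
      rw [Set.Finite.mem_toFinset]
      exact ⟨a, ha, b, hb, hab, rfl⟩
    have hne : hT.toFinset.Nonempty := ⟨|a - b|, hmem⟩
    set m := hT.toFinset.min' hne with hm
    have hmmem := hT.toFinset.min'_mem hne
    rw [Set.Finite.mem_toFinset] at hmmem
    obtain ⟨c, hc, d, hd, hcd, hmeq⟩ := hmmem
    have hmpos : 0 < m := by rw [hm, hmeq]; exact abs_pos.mpr (sub_ne_zero.mpr hcd)
    refine ⟨m / 3, by linarith, fun p hp q hq hpq => ?_⟩
    have : m ≤ |p - q| := hT.toFinset.min'_le _ (by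
      rw [Set.Finite.mem_toFinset]; exact ⟨p, hp, q, hq, hpq, rfl⟩)
    linarith
  · push_neg at h
    exact ⟨1, one_pos, fun a ha b hb hab => absurd (h a ha b hb) (by simpa using hab)⟩

lemma abs_accPt_le {y : ℕ → ℝ} {C : ℝ} (hC : ∀ m, |y m| ≤ C) {μ : ℝ} (hμ : μ ∈ AccPts y) :
    |μ| ≤ ⨆ m, |y m| := by
  have hbdd : BddAbove (Set.range fun m => |y m|) := ⟨C, by rintro _ ⟨m, rfl⟩; exact hC m⟩
  by_contra hcon
  push_neg at hcon
  set S := ⨆ m, |y m| with hS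
  have hδ : (0:ℝ) < |μ| - S := by linarith
  obtain ⟨n, hn⟩ := (hμ _ hδ).nonempty
  have h1 : |y n| ≤ S := le_ciSup hbdd n
  have h2 : |μ| - |y n| ≤ |μ - y n| := abs_sub_abs_le_abs_sub μ (y n)
  rw [abs_sub_comm] at h2
  have hn' : |y n - μ| < |μ| - S := hn
  linarith

lemma sum_acc {x y : ℕ → ℝ} {Cy : ℝ} (hy : ∀ m, |y m| ≤ Cy) {η : ℝ} (hη : η ∈ AccPts x) :
    ∃ μ ∈ AccPts y, η + μ ∈ AccPts (x + y) := by
  obtain ⟨φ, hφ, hφt⟩ := subseq_of_accPts hη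
  obtain ⟨μ, ψ, hψ, hψt⟩ := bw (z := fun k => y (φ k)) (fun n => hy _)
  refine ⟨μ, accPts_of_subseq (hφ.comp hψ) hψt, accPts_of_subseq (hφ.comp hψ) ?_⟩
  have hx' : Tendsto (fun k => x (φ (ψ k))) atTop (𝓝 η) := hφt.comp hψ.tendsto_atTop
  exact hx'.add hψt

lemma sum_acc' {x y : ℕ → ℝ} {Cx : ℝ} (hx : ∀ m, |x m| ≤ Cx) {μ : ℝ} (hμ : μ ∈ AccPts y) :
    ∃ η ∈ AccPts x, η + μ ∈ AccPts (x + y) := by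
  obtain ⟨φ, hφ, hφt⟩ := subseq_of_accPts hμ
  obtain ⟨η, ψ, hψ, hψt⟩ := bw (z := fun k => x (φ k)) (fun n => hx _)
  refine ⟨η, accPts_of_subseq (hφ.comp hψ) hψt, accPts_of_subseq (hφ.comp hψ) ?_⟩
  have hy' : Tendsto (fun k => y (φ (ψ k))) atTop (𝓝 μ) := hφt.comp hψ.tendsto_atTop
  exact hψt.add hy'

lemma acc_sum_subset {x y : ℕ → ℝ} {Cx Cy : ℝ} (hx : ∀ m, |x m| ≤ Cx) (hy : ∀ m, |y m| ≤ Cy) :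
    AccPts (x + y) ⊆ Set.image2 (· + ·) (AccPts x) (AccPts y) := by
  intro z hz
  obtain ⟨φ, hφ, hφt⟩ := subseq_of_accPts hz
  obtain ⟨η, ψ, hψ, hψt⟩ := bw (z := fun k => x (φ k)) (fun n => hx _)
  obtain ⟨μ, χ, hχ, hχt⟩ := bw (z := fun k => y (φ (ψ k))) (fun n => hy _)
  have hxt : Tendsto (fun j => x (φ (ψ (χ j)))) atTop (𝓝 η) := hψt.comp hχ.tendsto_atTop
  have hsum : Tendsto (fun j => (x + y) (φ (ψ (χ j)))) atTop (𝓝 (η + μ)) := hxt.add hχt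
  have hsum' : Tendsto (fun j => (x + y) (φ (ψ (χ j)))) atTop (𝓝 z) :=
    hφt.comp ((hψ.comp hχ).tendsto_atTop)
  have hz_eq : z = η + μ := tendsto_nhds_unique hsum' hsum
  exact ⟨η, accPts_of_subseq ((hφ.comp hψ).comp hχ) hxt,
    μ, accPts_of_subseq ((hφ.comp hψ).comp hχ) hχt, hz_eq.symm⟩

theorem stmt_12 (x : ℕ → ℝ) (hx : ∃ C, ∀ m, |x m| ≤ C) (hxf : (AccPts x).Finite) :
    ∃ ε > (0 : ℝ), ∀ y : ℕ → ℝ, (∃ C, ∀ m, |y m| ≤ C) → (AccPts y).Finite →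
      (⨆ m, |y m|) < ε →
        (AccPts x).ncard ≤ (AccPts (x + y)).ncard ∧
        (AccPts y).ncard ≤ (AccPts (x + y)).ncard := by
  obtain ⟨Cx, hCx⟩ := hx
  obtain ⟨ε, hε, hsep⟩ := exists_sep hxf
  refine ⟨ε, hε, ?_⟩
  intro y hyB hyf hsup
  obtain ⟨Cy, hCy⟩ := hyB
  have hyabs : ∀ μ ∈ AccPts y, |μ| < ε := fun μ hμ =>
    lt_of_le_of_lt (abs_accPt_le hCy hμ) hsup
  have hfin : (AccPts (x + y)).Finite :=
    (Set.Finite.image2 _ hxf hyf).subset (acc_sum_subset hCx hCy)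
  constructor
  · have hch : ∀ η ∈ AccPts x, ∃ μ ∈ AccPts y, η + μ ∈ AccPts (x + y) :=
      fun η hη => sum_acc hCy hη
    choose! μf hμf1 hμf2 using hch
    have hinj : Set.InjOn (fun η => η + μf η) (AccPts x) := by
      intro a ha b hb hab
      by_contra hne
      have h3 : 3 * ε ≤ |a - b| := hsep a ha b hb hne
      have h1 := abs_lt.mp (hyabs _ (hμf1 a ha))
      have h2 := abs_lt.mp (hyabs _ (hμf1 b hb))
      simp only at hab
      rcases abs_cases (a - b) with ⟨he, _⟩ | ⟨he, _⟩ <;> rw [he] at h3 <;> linarith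
    calc (AccPts x).ncard = ((fun η => η + μf η) '' AccPts x).ncard :=
          (Set.ncard_image_of_injOn hinj).symm
      _ ≤ (AccPts (x + y)).ncard :=
          Set.ncard_le_ncard (by rintro _ ⟨a, ha, rfl⟩; exact hμf2 a ha) hfin
  · have hch : ∀ μ ∈ AccPts y, ∃ η ∈ AccPts x, η + μ ∈ AccPts (x + y) :=
      fun μ hμ => sum_acc' hCx hμ
    choose! ηf hηf1 hηf2 using hch
    have hinj : Set.InjOn (fun μ => ηf μ + μ) (AccPts y) := by
      intro a ha b hb hab
      by_contra hne
      simp only at hab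
      have h1 := abs_lt.mp (hyabs _ ha)
      have h2 := abs_lt.mp (hyabs _ hb)
      have hηne : ηf a ≠ ηf b := by
        intro h; apply hne; rw [h] at hab; linarith
      have h3 : 3 * ε ≤ |ηf a - ηf b| := hsep _ (hηf1 a ha) _ (hηf1 b hb) hηne
      rcases abs_cases (ηf a - ηf b) with ⟨he, _⟩ | ⟨he, _⟩ <;> rw [he] at h3 <;> linarith
    calc (AccPts y).ncard = ((fun μ => ηf μ + μ) '' AccPts y).ncard :=
          (Set.ncard_image_of_injOn hinj).symm
      _ ≤ (AccPts (x + y)).ncard :=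
          Set.ncard_le_ncard (by rintro _ ⟨a, ha, rfl⟩; exact hηf2 a ha) hfin
end

section
/- Let x ∈ ℓ∞ have exactly k accumulation points with representation x ∼_{c₀} ξ₁·1_{S₁}+⋯+ξ_k·1_{S_k} and y ∈ ℓ∞ have exactly n accumulation points with representation y ∼_{c₀} η₁·1_{T₁}+⋯+ηₙ·1_{Tₙ}, where k ≤ n. If every z in the linear span of {x,y} has at most n accumulation points, then for every i ∈ {1,…,n} there exists j ∈ {1,…,k} such that T_i ∖ S_j is finite. -/
open Filter Topology Set

lemma accPts_mono_c0 {z w : ℕ → ℝ} (h : Tendsto (fun l => z l - w l) atTop (𝓝 0)) :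
    AccPts z ⊆ AccPts w := by
  intro η hη ε hε
  obtain ⟨N, hN⟩ := (Metric.tendsto_atTop.mp h) (ε/2) (by linarith)
  have h1 : ({l : ℕ | |z l - η| < ε/2} \ {l | l < N}).Infinite :=
    (hη (ε/2) (by linarith)).diff (Set.finite_lt_nat N)
  refine h1.mono ?_
  rintro l ⟨h2, h3⟩
  simp only [Set.mem_setOf_eq, not_lt] at *
  have h4 := hN l h3
  rw [Real.dist_eq, sub_zero] at h4
  have h5 : |w l - η| ≤ |w l - z l| + |z l - η| := abs_sub_le _ _ _
  rw [abs_sub_comm (w l) (z l)] at h5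
  linarith

lemma step_val {ι : Type*} [Fintype ι] (P : ι → Set ℕ) (v : ι → ℝ)
    (hdisj : Pairwise fun i j => Disjoint (P i) (P j)) {p : ι} {l : ℕ} (hl : l ∈ P p) :
    ∑ q, (P q).indicator (fun _ => v q) l = v p := by
  rw [Finset.sum_eq_single p]
  · simp [Set.indicator_of_mem hl]
  · intro q _ hq
    exact Set.indicator_of_notMem (fun hlq => (hdisj hq).le_bot ⟨hlq, hl⟩) _
  · simp

lemma acc_step {ι : Type*} [Fintype ι] (P : ι → Set ℕ) (v : ι → ℝ)
    (hdisj : Pairwise fun i j => Disjoint (P i) (P j)) (hcov : (⋃ p, P p) = Set.univ) :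
    AccPts (fun l => ∑ q, (P q).indicator (fun _ => v q) l) = v '' {p | (P p).Infinite} := by
  classical
  have hex : ∃ p, (P p).Infinite := by
    by_contra h
    push_neg at h
    have h2 : (⋃ p, P p).Finite := Set.finite_iUnion h
    rw [hcov] at h2
    exact Set.infinite_univ h2
  apply subset_antisymm
  · intro η hη
    by_contra hmem
    set F := Finset.univ.filter (fun p => (P p).Infinite) with hFdef
    obtain ⟨p0, hp0⟩ := hex
    have hF : F.Nonempty := ⟨p0, by simp [hFdef, hp0]⟩
    set ε := F.inf' hF (fun p => |v p - η|) with hεdef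
    have hε : 0 < ε := by
      rw [hεdef, Finset.lt_inf'_iff]
      intro p hp
      rw [abs_pos, sub_ne_zero]
      intro hvp
      exact hmem ⟨p, by simpa [hFdef] using hp, hvp⟩
    have hG : (⋃ p, if (P p).Infinite then (∅ : Set ℕ) else P p).Finite :=
      Set.finite_iUnion (fun p => by
        split_ifs with h
        · exact Set.finite_empty
        · exact Set.not_infinite.mp h)
    obtain ⟨l, hl1, hl2⟩ := ((hη ε hε).diff hG).nonempty
    obtain ⟨p, hp⟩ : ∃ p, l ∈ P p := by
      have : l ∈ ⋃ p, P p := hcov ▸ Set.mem_univ l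
      simpa using this
    have hpinf : (P p).Infinite := by
      by_contra h
      exact hl2 (Set.mem_iUnion.mpr ⟨p, by simp [h, hp]⟩)
    have hstep : (∑ q, (P q).indicator (fun _ => v q) l) = v p := step_val P v hdisj hp
    rw [Set.mem_setOf_eq] at hl1
    beta_reduce at hl1
    rw [hstep] at hl1
    have hle : ε ≤ |v p - η| := Finset.inf'_le _ (by simp [hFdef, hpinf])
    linarith
  · rintro _ ⟨p, hp, rfl⟩ ε hε
    refine hp.mono ?_
    intro l hl
    rw [Set.mem_setOf_eq]
    beta_reduce
    rw [step_val P v hdisj hl]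
    simpa using hε


theorem stmt_13 (x y : ℕ → ℝ) (k n : ℕ) (hkn : k ≤ n)
    (S : Fin k → Set ℕ) (ξ : Fin k → ℝ)
    (hSinf : ∀ i, (S i).Infinite) (hSdisj : Pairwise (fun i j => Disjoint (S i) (S j)))
    (hScov : (⋃ i, S i) = Set.univ) (hξ : Function.Injective ξ)
    (hxrep : Tendsto (fun l => x l - ∑ i, (S i).indicator (fun _ => ξ i) l) atTop (𝓝 0))
    (T : Fin n → Set ℕ) (η : Fin n → ℝ)
    (hTinf : ∀ j, (T j).Infinite) (hTdisj : Pairwise (fun i j => Disjoint (T i) (T j)))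
    (hTcov : (⋃ j, T j) = Set.univ) (hη : Function.Injective η)
    (hyrep : Tendsto (fun l => y l - ∑ j, (T j).indicator (fun _ => η j) l) atTop (𝓝 0))
    (hspan : ∀ z ∈ Submodule.span ℝ ({x, y} : Set (ℕ → ℝ)),
      (AccPts z).Finite ∧ (AccPts z).ncard ≤ n) :
    ∀ i : Fin n, ∃ j : Fin k, (T i \ S j).Finite := by
  classical
  -- cover lemmas
  have hmemS : ∀ l : ℕ, ∃ j, l ∈ S j := by
    intro l
    have : l ∈ ⋃ j, S j := hScov ▸ Set.mem_univ l
    simpa using this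
  have hmemT : ∀ l : ℕ, ∃ i, l ∈ T i := by
    intro l
    have : l ∈ ⋃ i, T i := hTcov ▸ Set.mem_univ l
    simpa using this
  -- for each i there is j with S j ∩ T i infinite
  have hex : ∀ i : Fin n, ∃ j : Fin k, (S j ∩ T i).Infinite := by
    intro i
    by_contra h
    push_neg at h
    have hsub : T i ⊆ ⋃ j, S j ∩ T i := by
      intro l hl
      obtain ⟨j, hj⟩ := hmemS l
      exact Set.mem_iUnion.mpr ⟨j, hj, hl⟩
    exact hTinf i ((Set.finite_iUnion h).subset hsub)
  choose g hg using hex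
  -- pick a generic coefficient c
  set B : Set ℝ := Set.range (fun p : (Fin k × Fin n) × Fin k × Fin n =>
      (η p.2.2 - η p.1.2) / (ξ p.1.1 - ξ p.2.1)) with hBdef
  have hBfin : B.Finite := Set.finite_range _
  obtain ⟨c, hc⟩ := hBfin.infinite_compl.nonempty
  set w : Fin k × Fin n → ℝ := fun q => c * ξ q.1 + η q.2 with hwdef
  have winj : Function.Injective w := by
    intro q q' hqq
    by_cases hj : q.1 = q'.1
    · refine Prod.ext hj (hη ?_)
      rw [hwdef] at hqq
      simp only [hj] at hqq
      linarith [hqq]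
    · exfalso
      apply hc
      refine ⟨(q, q'), ?_⟩
      have hx0 : ξ q.1 - ξ q'.1 ≠ 0 := sub_ne_zero.mpr (fun h => hj (hξ h))
      rw [div_eq_iff hx0]
      simp only [hwdef] at hqq
      ring_nf
      ring_nf at hqq
      linarith
  -- product partition
  set R : Fin k × Fin n → Set ℕ := fun q => S q.1 ∩ T q.2 with hRdef
  have hRdisj : Pairwise fun a b => Disjoint (R a) (R b) := by
    intro q q' hne
    by_cases h : q.1 = q'.1
    · have h2 : q.2 ≠ q'.2 := fun h2 => hne (Prod.ext h h2)
      exact ((hTdisj h2).mono Set.inter_subset_right Set.inter_subset_right)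
    · exact ((hSdisj h).mono Set.inter_subset_left Set.inter_subset_left)
  have hRcov : (⋃ q, R q) = Set.univ := by
    ext l
    simp only [Set.mem_iUnion, Set.mem_univ, iff_true]
    obtain ⟨j, hj⟩ := hmemS l
    obtain ⟨i, hi⟩ := hmemT l
    exact ⟨(j, i), hj, hi⟩
  -- z := c • x + y
  set z : ℕ → ℝ := c • x + y with hzdef
  have hz : z ∈ Submodule.span ℝ ({x, y} : Set (ℕ → ℝ)) := by
    apply Submodule.add_mem
    · exact Submodule.smul_mem _ c (Submodule.subset_span (Set.mem_insert _ _))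
    · exact Submodule.subset_span (Set.mem_insert_of_mem _ rfl)
  have hzrep : Tendsto (fun l => z l - ∑ q, (R q).indicator (fun _ => w q) l) atTop (𝓝 0) := by
    have key : ∀ l, (∑ q, (R q).indicator (fun _ => w q) l)
        = c * (∑ j, (S j).indicator (fun _ => ξ j) l) + ∑ i, (T i).indicator (fun _ => η i) l := by
      intro l
      obtain ⟨j0, hj0⟩ := hmemS l
      obtain ⟨i0, hi0⟩ := hmemT l
      rw [step_val S ξ hSdisj hj0, step_val T η hTdisj hi0,
        step_val R w hRdisj (show l ∈ R (j0, i0) from ⟨hj0, hi0⟩)]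
    have heq : (fun l => z l - ∑ q, (R q).indicator (fun _ => w q) l)
        = fun l => c * (x l - ∑ j, (S j).indicator (fun _ => ξ j) l)
            + (y l - ∑ i, (T i).indicator (fun _ => η i) l) := by
      funext l
      rw [key l]
      simp only [hzdef, Pi.add_apply, Pi.smul_apply, smul_eq_mul]
      ring
    rw [heq]
    have := (hxrep.const_mul c).add hyrep
    simpa using this
  have hAcc : AccPts z = w '' {q | (R q).Infinite} := by
    apply subset_antisymm
    · exact acc_step R w hRdisj hRcov ▸ accPts_mono_c0 hzrep
    · rw [← acc_step R w hRdisj hRcov]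
      apply accPts_mono_c0
      have := hzrep.neg
      simpa using this
  -- counting
  obtain ⟨-, hle⟩ := hspan z hz
  rw [hAcc, Set.ncard_image_of_injective _ winj] at hle
  set Qf : Finset (Fin k × Fin n) := Finset.univ.filter (fun q => (R q).Infinite) with hQdef
  have hQeq : {q | (R q).Infinite} = ↑Qf := by
    ext q
    simp [hQdef]
  rw [hQeq, Set.ncard_coe_finset] at hle
  have huniq : ∀ (i : Fin n) (j : Fin k), (S j ∩ T i).Infinite → j = g i := by
    by_contra hcon
    push_neg at hcon
    obtain ⟨i0, j', hinf, hne⟩ := hcon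
    set Ff : Finset (Fin k × Fin n) :=
      insert (j', i0) (Finset.univ.image (fun i => (g i, i))) with hFdef
    have hFsub : Ff ⊆ Qf := by
      intro q hq
      simp only [hFdef, Finset.mem_insert, Finset.mem_image, Finset.mem_univ, true_and] at hq
      simp only [hQdef, Finset.mem_filter, Finset.mem_univ, true_and, hRdef]
      rcases hq with rfl | ⟨i, rfl⟩
      · exact hinf
      · exact hg i
    have hcard : Ff.card = n + 1 := by
      rw [hFdef, Finset.card_insert_of_notMem, Finset.card_image_of_injective,
        Finset.card_univ, Fintype.card_fin]
      · intro a b hab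
        exact (Prod.mk.injEq _ _ _ _).mp hab |>.2
      · simp only [Finset.mem_image, Finset.mem_univ, true_and, not_exists]
        intro i hi
        rw [Prod.mk.injEq] at hi
        obtain ⟨h1, h2⟩ := hi
        exact hne (h2 ▸ h1.symm)
    have := Finset.card_le_card hFsub
    omega
  -- conclude
  intro i
  refine ⟨g i, ?_⟩
  have hsub : T i \ S (g i) ⊆ ⋃ j, if j = g i then (∅ : Set ℕ) else (S j ∩ T i) := by
    rintro l ⟨hl1, hl2⟩
    obtain ⟨j, hj⟩ := hmemS l
    refine Set.mem_iUnion.mpr ⟨j, ?_⟩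
    have hjne : j ≠ g i := fun h => hl2 (h ▸ hj)
    simp [hjne, hj, hl1]
  refine (Set.finite_iUnion fun j => ?_).subset hsub
  split_ifs with h
  · exact Set.finite_empty
  · refine Set.not_infinite.mp (fun hinf => h (huniq i j hinf))
end

section
/- For all integers n ≥ 1 and d ≥ 0, there exist vectors v₁, …, v_{n+d} ∈ ℝ^{d+1} such that for every non-zero α ∈ ℝ^{d+1}, the set {⟨α, v₁⟩, …, ⟨α, v_{n+d}⟩} of inner products has cardinality at least n. -/
open MvPolynomial Finset

theorem stmt_15 (n d : ℕ) (hn : 1 ≤ n) :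
    ∃ v : Fin (n + d) → (Fin (d + 1) → ℝ),
      ∀ α : Fin (d + 1) → ℝ, α ≠ 0 →
        n ≤ (Finset.image (fun k => ∑ i, α i * v k i) Finset.univ).card := by
  classical
  -- the finite set of admissible pair-systems
  set T : Finset ((Fin (d+1) → Fin (n+d)) × (Fin (d+1) → Fin (n+d))) :=
    Finset.univ.filter (fun ab => Function.Injective ab.1 ∧ ∀ i j, ab.1 i ≠ ab.2 j) with hT
  set p : ((Fin (d+1) → Fin (n+d)) × (Fin (d+1) → Fin (n+d))) →
      MvPolynomial (Fin (n+d) × Fin (d+1)) ℝ :=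
    fun ab => Matrix.det (Matrix.of fun i j =>
      (MvPolynomial.X (ab.1 i, j) - MvPolynomial.X (ab.2 i, j))) with hp
  have hpne : ∀ ab ∈ T, p ab ≠ 0 := by
    intro ab hab
    rw [hT, Finset.mem_filter] at hab
    obtain ⟨-, hinj, hne⟩ := hab
    intro h0
    set xe : (Fin (n+d) × Fin (d+1)) → ℝ := fun q => if ab.1 q.2 = q.1 then (1:ℝ) else 0 with hxe
    have h1 : MvPolynomial.eval xe (p ab) = 1 := by
      rw [hp]
      beta_reduce
      rw [RingHom.map_det]
      have hm : (MvPolynomial.eval xe).mapMatrix (Matrix.of fun i j =>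
          (MvPolynomial.X (ab.1 i, j) - MvPolynomial.X (ab.2 i, j) :
            MvPolynomial (Fin (n+d) × Fin (d+1)) ℝ))
          = (1 : Matrix (Fin (d+1)) (Fin (d+1)) ℝ) := by
        ext i j
        simp only [RingHom.mapMatrix_apply, Matrix.map_apply, Matrix.of_apply, map_sub,
          MvPolynomial.eval_X]
        rw [hxe]
        simp only
        rw [if_neg (hne j i)]
        by_cases h : i = j
        · subst h; simp [Matrix.one_apply]
        · rw [if_neg (fun hh => h (hinj hh).symm), Matrix.one_apply_ne h]
          ring
      rw [hm, Matrix.det_one]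
    rw [h0, map_zero] at h1
    exact zero_ne_one h1
  have hProd : (∏ ab ∈ T, p ab) ≠ 0 := Finset.prod_ne_zero_iff.mpr hpne
  have hx : ∃ x : (Fin (n+d) × Fin (d+1)) → ℝ,
      MvPolynomial.eval x (∏ ab ∈ T, p ab) ≠ 0 := by
    by_contra h
    push_neg at h
    exact hProd (MvPolynomial.funext (q := 0) (by simpa using h))
  obtain ⟨x, hxne⟩ := hx
  refine ⟨fun k j => x (k, j), ?_⟩
  intro α hα
  by_contra hcard
  push_neg at hcard
  set v : Fin (n+d) → Fin (d+1) → ℝ := fun k j => x (k, j) with hv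
  set f : Fin (n+d) → ℝ := fun k => ∑ i, α i * v k i with hf
  have hpos : 0 < n + d := by omega
  -- representative function
  set G : ℝ → Fin (n+d) := fun y =>
    if h : (Finset.univ.filter (fun j => f j = y)).Nonempty
    then (Finset.univ.filter (fun j => f j = y)).min' h else ⟨0, hpos⟩ with hG
  set g : Fin (n+d) → Fin (n+d) := fun k => G (f k) with hg
  have hne0 : ∀ k, (Finset.univ.filter (fun j => f j = f k)).Nonempty :=
    fun k => ⟨k, by simp⟩
  have hg1 : ∀ k, f (g k) = f k := by
    intro k
    have := Finset.min'_mem _ (hne0 k)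
    rw [Finset.mem_filter] at this
    rw [hg, hG]
    simp only [dif_pos (hne0 k)]
    exact this.2
  have hgg : ∀ k, g (g k) = g k := by
    intro k
    show G (f (g k)) = g k
    rw [hg1 k]
  -- counting
  have hcard2 : (Finset.univ.image g).card < n := by
    have : Finset.univ.image g = (Finset.univ.image f).image G := by
      rw [Finset.image_image]; rfl
    rw [this]
    exact lt_of_le_of_lt (Finset.card_image_le) hcard
  have hfix : (Finset.univ.filter (fun k => g k = k)).card < n := by
    refine lt_of_le_of_lt (Finset.card_le_card ?_) hcard2
    intro k hk
    rw [Finset.mem_filter] at hk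
    rw [Finset.mem_image]
    exact ⟨k, Finset.mem_univ k, hk.2⟩
  have hA : d + 1 ≤ (Finset.univ.filter (fun k => ¬ g k = k)).card := by
    have := Finset.card_filter_add_card_filter_not
      (s := (Finset.univ : Finset (Fin (n+d)))) (p := fun k => g k = k)
    have hu : (Finset.univ : Finset (Fin (n+d))).card = n + d := by simp
    omega
  obtain ⟨s, hsA, hscard⟩ := Finset.exists_subset_card_eq hA
  set a : Fin (d+1) → Fin (n+d) := fun i => s.orderEmbOfFin hscard i with ha
  have hamem : ∀ i, a i ∈ Finset.univ.filter (fun k => ¬ g k = k) :=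
    fun i => hsA (Finset.orderEmbOfFin_mem s hscard i)
  have hanf : ∀ i, g (a i) ≠ a i := by
    intro i
    have := hamem i
    rw [Finset.mem_filter] at this
    exact this.2
  set b : Fin (d+1) → Fin (n+d) := fun i => g (a i) with hb
  have hbdef : ∀ j, b j = g (a j) := fun j => rfl
  have habT : (a, b) ∈ T := by
    rw [hT, Finset.mem_filter]
    refine ⟨Finset.mem_univ _, (s.orderEmbOfFin hscard).injective, ?_⟩
    intro i j hij
    apply hanf i
    replace hij : a i = b j := hij
    rw [hbdef j] at hij
    calc g (a i) = g (g (a j)) := by rw [← hij]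
    _ = g (a j) := hgg _
    _ = a i := hij.symm
  -- the matrix
  have hdet : (Matrix.of fun i j => v (a i) j - v (b i) j).det ≠ 0 := by
    have hev : MvPolynomial.eval x (p (a, b)) ≠ 0 := by
      rw [map_prod] at hxne
      exact Finset.prod_ne_zero_iff.mp hxne (a, b) habT
    rw [hp] at hev
    beta_reduce at hev
    rw [RingHom.map_det] at hev
    have hm : (MvPolynomial.eval x).mapMatrix (Matrix.of fun i j =>
        (MvPolynomial.X ((a, b).1 i, j) - MvPolynomial.X ((a, b).2 i, j) :
          MvPolynomial (Fin (n+d) × Fin (d+1)) ℝ))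
        = Matrix.of fun i j => v (a i) j - v (b i) j := by
      ext i j
      simp [hv]
    rwa [hm] at hev
  have hmul : (Matrix.of fun i j => v (a i) j - v (b i) j).mulVec α = 0 := by
    funext i
    simp only [Matrix.mulVec, dotProduct, Matrix.of_apply, Pi.zero_apply]
    have : ∑ j, (v (a i) j - v (b i) j) * α j = f (a i) - f (b i) := by
      rw [hf]
      simp only
      rw [← Finset.sum_sub_distrib]
      refine Finset.sum_congr rfl (fun j _ => by ring)
    rw [this, hbdef i, hg1 (a i), sub_self]
  exact hα (Matrix.eq_zero_of_mulVec_eq_zero hdet hmul)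
end

section
/- The set ⋃_{2 ≤ n < ω} L(n) of bounded non-convergent sequences with finitely many accumulation points is not spaceable in ℓ∞: there is no closed infinite-dimensional linear subspace Y of ℓ∞ such that every non-zero element of Y has finitely many accumulation points but is not convergent. -/
open Filter Topology Set

/-!
For a free ultrafilter `U` on `ℕ`, the limit along `U` is a continuous linear functional on `ℓ∞`
whose value at `x` is an accumulation point of `x`. Restricted to an infinite-dimensional subspace
`Y` without nonzero null sequences, these functionals form an infinite set: otherwise their common
kernel in `Y` would be nonzero, and would consist of sequences tending to `0`. By Baire's
theorem the Banach space `Y` is not covered by the countably many proper closed subspaces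
`ker (f i - f j)` for a sequence `f` of distinct such functionals, so some `y ∈ Y` has pairwise
distinct values `f i y`, i.e. infinitely many accumulation points.
-/

theorem exists_injective_apply_of_injective {ι 𝕜 E : Type*} [Countable ι]
    [NontriviallyNormedField 𝕜] [NormedAddCommGroup E] [NormedSpace 𝕜 E] [CompleteSpace E]
    {f : ι → E →L[𝕜] 𝕜} (hf : Function.Injective f) :
    ∃ y, Function.Injective fun i => f i y := by
  by_contra! h
  let K (p : {p : ι × ι // p.1 ≠ p.2}) : Submodule 𝕜 E := (f p.1.1 - f p.1.2 : E →L[𝕜] 𝕜).ker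
  have hcover : ⋃ p, (K p : Set E) = univ := by
    refine eq_univ_of_forall fun y => mem_iUnion.2 ?_
    obtain ⟨i, j, hij, hne⟩ : ∃ i j, f i y = f j y ∧ i ≠ j := by
      simpa [Function.Injective] using h y
    exact ⟨⟨(i, j), hne⟩, by simpa [K, sub_eq_zero] using hij⟩
  have hclosed (p) : IsClosed (K p : Set E) := (f p.1.1 - f p.1.2).isClosed_ker
  obtain ⟨⟨⟨i, j⟩, hne⟩, hint⟩ := nonempty_interior_of_iUnion_of_closed hclosed hcover
  have htop : K ⟨(i, j), hne⟩ = ⊤ := Submodule.eq_top_of_nonempty_interior' _ hint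
  refine hne (hf (ContinuousLinearMap.ext fun y => sub_eq_zero.1 ?_))
  simpa [K] using htop.ge (Submodule.mem_top (x := y))

theorem exists_ne_zero_forall_eq_zero_of_not_finite {K V ι : Type*} [Field K] [AddCommGroup V]
    [Module K V] [Finite ι] (hV : ¬ Module.Finite K V) (f : ι → V →ₗ[K] K) :
    ∃ v ≠ 0, ∀ i, f i v = 0 := by
  by_contra! h
  refine hV (Module.Finite.of_injective (LinearMap.pi f) ?_)
  refine (injective_iff_map_eq_zero _).2 fun v hv => ?_
  by_contra hv0
  obtain ⟨i, hi⟩ := h v hv0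
  exact hi (congrFun hv i)

theorem mem_accPts_of_tendsto {x : ℕ → ℝ} {l : Filter ℕ} [l.NeBot] (hl : l ≤ atTop) {a : ℝ}
    (h : Tendsto x l (𝓝 a)) : a ∈ AccPts x := by
  intro ε hε hfin
  have hnear : {n | |x n - a| < ε} ∈ l := Metric.tendsto_nhds.1 h ε hε
  have hfar : {n | |x n - a| < ε}ᶜ ∈ l := hl (Nat.cofinite_eq_atTop ▸ hfin.compl_mem_cofinite)
  simpa using inter_mem hnear hfar

section UltrafilterLimit

variable {ι : Type*}

theorem lp.tendsto_limUnder_ultrafilter (U : Ultrafilter ι) (x : lp (fun _ : ι => ℝ) ⊤) :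
    Tendsto x (U : Filter ι) (𝓝 (limUnder U x)) := by
  have hbdd : ∀ i, x i ∈ Metric.closedBall (0 : ℝ) ‖x‖ := fun i =>
    mem_closedBall_zero_iff.2 (lp.norm_apply_le_norm ENNReal.top_ne_zero x i)
  obtain ⟨a, -, ha⟩ := (isCompact_closedBall (0 : ℝ) ‖x‖).ultrafilter_le_nhds (U.map x) <|
    le_principal_iff.2 <| Filter.mem_map.2 <| univ_mem' hbdd
  exact tendsto_nhds_limUnder ⟨a, ha⟩

noncomputable def ultrafilterLimit (U : Ultrafilter ι) : lp (fun _ : ι => ℝ) ⊤ →L[ℝ] ℝ :=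
  LinearMap.mkContinuous
    { toFun := fun x => limUnder U x
      map_add' := fun x y => tendsto_nhds_unique (lp.tendsto_limUnder_ultrafilter U (x + y))
        ((lp.tendsto_limUnder_ultrafilter U x).add (lp.tendsto_limUnder_ultrafilter U y))
      map_smul' := fun c x => tendsto_nhds_unique (lp.tendsto_limUnder_ultrafilter U (c • x))
        ((lp.tendsto_limUnder_ultrafilter U x).const_smul c) }
    1 fun x => by
      rw [one_mul]
      exact le_of_tendsto (lp.tendsto_limUnder_ultrafilter U x).norm
        (Eventually.of_forall fun i => lp.norm_apply_le_norm ENNReal.top_ne_zero x i)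

theorem tendsto_ultrafilterLimit (U : Ultrafilter ι) (x : lp (fun _ : ι => ℝ) ⊤) :
    Tendsto x (U : Filter ι) (𝓝 (ultrafilterLimit U x)) :=
  lp.tendsto_limUnder_ultrafilter U x

end UltrafilterLimit

theorem infinite_range_ultrafilterLimit_comp_subtypeL {Y : Submodule ℝ linf}
    (hYinf : ¬ Module.Finite ℝ Y) (hY : ∀ x ∈ Y, x ≠ 0 → ¬ Tendsto ⇑x atTop (𝓝 0)) :
    (range fun U : {U : Ultrafilter ℕ // (U : Filter ℕ) ≤ atTop} =>
      (ultrafilterLimit U.1).comp Y.subtypeL).Infinite := by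
  set Λ := fun U : {U : Ultrafilter ℕ // (U : Filter ℕ) ≤ atTop} =>
    (ultrafilterLimit U.1).comp Y.subtypeL
  intro hfin
  have := hfin.to_subtype
  obtain ⟨v, hv0, hv⟩ := exists_ne_zero_forall_eq_zero_of_not_finite hYinf
    fun g : range Λ => (g.1 : Y →ₗ[ℝ] ℝ)
  refine hY v v.2 (by simpa using hv0) <| (tendsto_iff_ultrafilter _ _ _).2 fun U hU => ?_
  have hU0 : ultrafilterLimit U v = 0 := hv ⟨Λ ⟨U, hU⟩, mem_range_self _⟩
  simpa [hU0] using tendsto_ultrafilterLimit U (v : linf)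

theorem stmt_16 :
    ¬ ∃ Y : Submodule ℝ linf, IsClosed (Y : Set linf) ∧ ¬ Module.Finite ℝ Y ∧
      ∀ x ∈ Y, x ≠ 0 →
        (AccPts ⇑x).Finite ∧ ¬ ∃ a : ℝ, Tendsto ⇑x atTop (𝓝 a) := by
  rintro ⟨Y, hYc, hYinf, hY⟩
  have := hYc.completeSpace_coe
  have hΛ := infinite_range_ultrafilterLimit_comp_subtypeL hYinf fun x hx hx0 h0 =>
    (hY x hx hx0).2 ⟨0, h0⟩
  obtain ⟨y, hy⟩ := exists_injective_apply_of_injective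
    (Subtype.val_injective.comp (hΛ.natEmbedding _).injective)
  have hacc : (AccPts ⇑(y : linf)).Infinite := by
    refine infinite_of_injective_forall_mem hy fun n => ?_
    obtain ⟨U, hU⟩ := (hΛ.natEmbedding _ n).2
    simp only [Function.comp_apply, ← hU]
    exact mem_accPts_of_tendsto U.2 (tendsto_ultrafilterLimit U.1 y)
  have hy0 : y ≠ 0 := by
    rintro rfl
    exact zero_ne_one (hy (a₁ := 0) (a₂ := 1) (by simp))
  exact hacc (hY y y.2 (by simpa using hy0)).1
end

section
/- The set L(ω) of bounded sequences with exactly countably infinitely many accumulation points is spaceable in ℓ∞: there exists a closed infinite-dimensional subspace Y of ℓ∞, isometric to c₀, such that every non-zero element of Y has exactly countably infinitely many accumulation points. -/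
open Filter Topology Set

open scoped ZeroAtInfty

/-!
Send `y ∈ c₀` to the sequence `n ↦ y k * w j`, where `n ↦ (k, j)` hits every pair infinitely often
and `w j = 1 - 2⁻ʲ` increases strictly to `1`. This is a linear isometry into `ℓ∞`, and the
accumulation points of the image of `y` form the closure of `{y k * w j}`. If `y k ≠ 0`, the
points `y k * w j` are infinitely many; and since `y k → 0` and `w j → 1`, the closure lies in the
continuous image of `(ℕ ∪ {∞})²`, which is countable.
-/

lemma accPts_comp_eq_closure_range {ι : Type*} {e : ℕ → ι} (he : ∀ i, {n | e n = i}.Infinite)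
    (f : ι → ℝ) : AccPts (f ∘ e) = closure (range f) := by
  ext η
  simp only [AccPts, Metric.mem_closure_iff, mem_ofPred_eq]
  constructor
  · intro hη ε hε
    obtain ⟨n, hn⟩ := (hη ε hε).nonempty
    exact ⟨f (e n), mem_range_self _, by rwa [Real.dist_eq, abs_sub_comm]⟩
  · rintro hη ε hε
    obtain ⟨_, ⟨i, rfl⟩, hi⟩ := hη ε hε
    refine (he i).mono fun n hn => ?_
    rw [mem_ofPred_eq] at hn
    rwa [mem_ofPred_eq, Function.comp_apply, hn, ← Real.dist_eq, dist_comm]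

lemma countable_closure_range_mul {u v : ℕ → ℝ} {a b : ℝ} (hu : Tendsto u atTop (𝓝 a))
    (hv : Tendsto v atTop (𝓝 b)) :
    (closure (range fun p : ℕ × ℕ => u p.1 * v p.2)).Countable := by
  let U := OnePoint.continuousMapMkNat u a hu
  let V := OnePoint.continuousMapMkNat v b hv
  let g : OnePoint ℕ × OnePoint ℕ → ℝ := fun p => U p.1 * V p.2
  have hg : Continuous g := by fun_prop
  have hsub : (range fun p : ℕ × ℕ => u p.1 * v p.2) ⊆ range g := by
    rintro _ ⟨p, rfl⟩
    exact ⟨(p.1, p.2), rfl⟩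
  exact (countable_range g).mono
    (closure_minimal hsub (isCompact_range hg).isClosed)

def pairEnum (n : ℕ) : ℕ × ℕ := (Nat.unpair n).2.unpair

lemma pairEnum_fiber_infinite (p : ℕ × ℕ) : {n | pairEnum n = p}.Infinite :=
  infinite_of_injective_forall_mem (f := fun m => Nat.pair m (Nat.pair p.1 p.2))
    (fun a b hab => by simpa using congrArg (fun n => (Nat.unpair n).1) hab)
    (fun m => by simp [pairEnum])

noncomputable def weight (j : ℕ) : ℝ := 1 - 2⁻¹ ^ j

lemma weight_injective : Function.Injective weight := fun i j h =>
  pow_right_injective₀ (by norm_num : (0 : ℝ) < 2⁻¹) (by norm_num) (by simpa [weight] using h)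

lemma weight_nonneg (j : ℕ) : 0 ≤ weight j :=
  sub_nonneg.2 (pow_le_one₀ (by norm_num) (by norm_num))

lemma weight_le_one (j : ℕ) : weight j ≤ 1 :=
  sub_le_self _ (by positivity)

lemma tendsto_weight : Tendsto weight atTop (𝓝 1) := by
  have h := (tendsto_pow_atTop_nhds_zero_of_lt_one (r := (2 : ℝ)⁻¹) (by norm_num)
    (by norm_num)).const_sub 1
  rwa [sub_zero] at h

noncomputable def spread (x : ℕ → ℝ) (n : ℕ) : ℝ :=
  x (pairEnum n).1 * weight (pairEnum n).2

lemma accPts_spread (x : ℕ → ℝ) :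
    AccPts (spread x) = closure (range fun p : ℕ × ℕ => x p.1 * weight p.2) :=
  accPts_comp_eq_closure_range pairEnum_fiber_infinite (fun p : ℕ × ℕ => x p.1 * weight p.2)

lemma infinite_accPts_spread {x : ℕ → ℝ} {k : ℕ} (hk : x k ≠ 0) :
    (AccPts (spread x)).Infinite := by
  rw [accPts_spread]
  exact infinite_of_injective_forall_mem (f := fun j => x k * weight j)
    (fun i j h => weight_injective (mul_left_cancel₀ hk h))
    (fun j => subset_closure ⟨(k, j), rfl⟩)

lemma countable_accPts_spread {x : ℕ → ℝ} {a : ℝ} (hx : Tendsto x atTop (𝓝 a)) :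
    (AccPts (spread x)).Countable := by
  rw [accPts_spread]
  exact countable_closure_range_mul hx tendsto_weight

lemma abs_mul_weight_le (r : ℝ) (j : ℕ) : |r * weight j| ≤ |r| := by
  rw [abs_mul, abs_of_nonneg (weight_nonneg j)]
  exact mul_le_of_le_one_right (abs_nonneg r) (weight_le_one j)

lemma abs_spread_le (y : C₀(ℕ, ℝ)) (n : ℕ) : |spread y n| ≤ ‖y‖ :=
  (abs_mul_weight_le _ _).trans (y.toBCF.norm_coe_le_norm _)

lemma memℓp_spread (y : C₀(ℕ, ℝ)) : Memℓp (spread y) ⊤ :=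
  memℓp_infty ⟨‖y‖, by rintro _ ⟨n, rfl⟩; exact abs_spread_le y n⟩

lemma norm_le_of_forall_abs_mul_weight_le (y : C₀(ℕ, ℝ)) {C : ℝ} (hC : 0 ≤ C)
    (h : ∀ k j, |y k * weight j| ≤ C) : ‖y‖ ≤ C := by
  rw [← ZeroAtInftyContinuousMap.norm_toBCF_eq_norm, BoundedContinuousFunction.norm_le hC]
  intro k
  have hlim : Tendsto (fun j => |y k * weight j|) atTop (𝓝 (|y k|)) := by
    simpa using (tendsto_weight.const_mul (y k)).abs
  exact le_of_tendsto hlim (Eventually.of_forall (h k))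

noncomputable def spreadIsometry : C₀(ℕ, ℝ) →ₗᵢ[ℝ] linf where
  toFun y := ⟨spread y, memℓp_spread y⟩
  map_add' y z := lp.ext <| funext fun n => by
    change spread (y + z) n = spread y n + spread z n
    simp [spread, add_mul]
  map_smul' c y := lp.ext <| funext fun n => by
    change spread (c • y) n = c * spread y n
    simp [spread, mul_assoc]
  norm_map' y := by
    refine le_antisymm (lp.norm_le_of_forall_le (norm_nonneg y) (abs_spread_le y)) ?_
    refine norm_le_of_forall_abs_mul_weight_le y (norm_nonneg _) fun k j => ?_
    have h := lp.norm_apply_le_norm ENNReal.top_ne_zero (⟨spread y, memℓp_spread y⟩ : linf)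
      (Nat.pair 0 (Nat.pair k j))
    simpa [spread, pairEnum] using h

noncomputable def ZeroAtInftyContinuousMap.single (k : ℕ) : C₀(ℕ, ℝ) where
  toFun := Pi.single k (1 : ℝ)
  continuous_toFun := continuous_of_discreteTopology
  zero_at_infty' := by
    rw [cocompact_eq_cofinite]
    refine tendsto_const_nhds.congr' ?_
    filter_upwards [(finite_singleton k).compl_mem_cofinite] with n hn
    exact (Pi.single_eq_of_ne (M := fun _ : ℕ => ℝ) hn 1).symm

lemma ZeroAtInftyContinuousMap.not_finite_nat : ¬ Module.Finite ℝ C₀(ℕ, ℝ) := by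
  let coeFn : C₀(ℕ, ℝ) →ₗ[ℝ] ℕ → ℝ :=
    { toFun := fun f => f, map_add' := fun _ _ => rfl, map_smul' := fun _ _ => rfl }
  have hind : LinearIndependent ℝ ZeroAtInftyContinuousMap.single :=
    LinearIndependent.of_comp coeFn (Pi.linearIndependent_single_one ℕ ℝ)
  exact fun _ => Module.Finite.not_linearIndependent_of_infinite _ hind

lemma ZeroAtInftyContinuousMap.tendsto_atTop_nat (y : C₀(ℕ, ℝ)) : Tendsto y atTop (𝓝 0) := by
  rw [← Nat.cofinite_eq_atTop, ← cocompact_eq_cofinite]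
  exact zero_at_infty y

theorem stmt_17 :
    ∃ Y : Submodule ℝ linf, IsClosed (Y : Set linf) ∧ ¬ Module.Finite ℝ Y ∧
      Nonempty (C₀(ℕ, ℝ) ≃ₗᵢ[ℝ] Y) ∧
      ∀ x ∈ Y, x ≠ 0 → (AccPts ⇑x).Infinite ∧ (AccPts ⇑x).Countable := by
  let T := spreadIsometry
  refine ⟨LinearMap.range T.toLinearMap, ?_, ?_, ⟨T.equivRange⟩, ?_⟩
  · rw [LinearMap.coe_range]
    exact T.isometry.isClosedEmbedding.isClosed_range
  · exact fun _ => ZeroAtInftyContinuousMap.not_finite_nat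
      (Module.Finite.equiv T.equivRange.symm.toLinearEquiv)
  · rintro _ ⟨y, rfl⟩ hy
    obtain ⟨k, hk⟩ := DFunLike.ne_iff.1 fun h : y = 0 => hy (by rw [h, map_zero])
    exact ⟨infinite_accPts_spread hk, countable_accPts_spread y.tendsto_atTop_nat⟩
end

section
/- Let x ∈ ℓ∞ have exactly n accumulation points with representation x ∼_{c₀} ξ₁·1_{S₁}+⋯+ξₙ·1_{Sₙ} and y ∈ ℓ∞ have exactly k accumulation points with representation y ∼_{c₀} η₁·1_{T₁}+⋯+η_k·1_{T_k}. Let ℰ = {(i,j) : S_i ∩ T_j is infinite} and suppose the points {(ξ_i, η_j) : (i,j) ∈ ℰ} ⊆ ℝ² are not collinear. Then there exists z in the span of {x, y} whose number of accumulation points satisfies ⌊(|ℰ|+1)/2⌋ ≤ |L_z| ≤ |ℰ| − 1. -/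
open Filter Topology Set

/-!
Up to a null sequence, `a • x + b • y` agrees with `l ↦ a * ξ (I l) + b * η (J l)`, where
`l ∈ S (I l) ∩ T (J l)`; hence its accumulation points are the values of the linear form `(a, b)` on
the point set `P = {(ξ i, η j) | (i, j) ∈ E}`, and we need a form that identifies some pair of points
of `P` but still takes at least `(|P| + 1) / 2` values. Start from a form `F` identifying a pair and
rotate it until a pair that `F` separates is identified, by a form `H`. No pair is strictly reversed
on the way, so `F` and `H` are co-monotone on `P`, and no two points agree under both; this forces
`|F(P)| + |H(P)| ≥ |P| + 1`, and the larger of the two images does the job.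
-/

theorem Finset.card_add_one_le_card_image_add_card_image {α β γ : Type*} [DecidableEq α]
    [LinearOrder β] [LinearOrder γ] {f : α → β} {h : α → γ} {s : Finset α} (hs : s.Nonempty)
    (hmono : ∀ p ∈ s, ∀ q ∈ s, f p < f q → h p ≤ h q)
    (hinj : InjOn (fun p => (f p, h p)) s) :
    s.card + 1 ≤ (s.image f).card + (s.image h).card := by
  induction s using Finset.induction_on_max_value (fun p => toLex (f p, h p)) with
  | empty => exact absurd hs Finset.not_nonempty_empty
  | insert a s ha hmax ih =>
    rcases s.eq_empty_or_nonempty with rfl | hs'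
    · simp
    rw [Finset.coe_insert] at hinj
    specialize ih hs' (fun p hp q hq => hmono p (by simp [hp]) q (by simp [hq]))
      (hinj.mono (Set.subset_insert a s))
    have hne : ∀ p ∈ s, f p = f a → h p = h a → False := fun p hp hf hh =>
      ha (hinj (by simp [hp]) (Set.mem_insert a _) (Prod.ext hf hh) ▸ hp)
    -- `a` is lexicographically maximal, so repeating an `f`-value at `q` and an `h`-value at `r`
    -- would give `h q < h a = h r` together with `f r < f a = f q`
    have hnew : f a ∉ s.image f ∨ h a ∉ s.image h := by
      by_contra! ⟨hf, hh⟩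
      obtain ⟨q, hq, hfq⟩ := Finset.mem_image.mp hf
      obtain ⟨r, hr, hhr⟩ := Finset.mem_image.mp hh
      have hq' : h q < h a := by
        have := Prod.Lex.toLex_le_toLex'.mp (hmax q hq)
        exact (this.2 hfq).lt_of_ne (hne q hq hfq)
      have hr' : f r < f a :=
        (Prod.Lex.toLex_le_toLex'.mp (hmax r hr)).1.lt_of_ne (hne r hr · hhr)
      have := hmono r (by simp [hr]) q (by simp [hq]) (hfq ▸ hr')
      exact hq'.not_ge (hhr ▸ this)
    rw [Finset.card_insert_of_notMem ha, Finset.image_insert, Finset.image_insert]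
    rcases hnew with hf | hh
    · rw [Finset.card_insert_of_notMem hf]
      have := Finset.card_le_card (Finset.subset_insert (h a) (s.image h))
      omega
    · rw [Finset.card_insert_of_notMem hh]
      have := Finset.card_le_card (Finset.subset_insert (f a) (s.image f))
      omega

theorem Finset.card_image_lt_of_not_injOn {α β : Type*} [DecidableEq β] {f : α → β}
    {s : Finset α} (h : ¬ InjOn f s) : (s.image f).card < s.card :=
  Finset.card_image_le.lt_of_ne fun he => h (Finset.card_image_iff.mp he)

theorem exists_comonotone_collapse {α : Type*} {s : Finset α} {F K : α → ℝ}
    (hFK : InjOn (fun p => (F p, K p)) s)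
    (hpair : ∃ p ∈ s, ∃ q ∈ s, F p ≠ F q ∧ K p ≠ K q) :
    ∃ c : ℝ, (∃ p ∈ s, ∃ q ∈ s, p ≠ q ∧ F p + c * K p = F q + c * K q) ∧
      (∀ p ∈ s, ∀ q ∈ s, F p < F q → F p + c * K p ≤ F q + c * K q) ∧
      InjOn (fun p => (F p, F p + c * K p)) s := by
  classical
  set D := (s ×ˢ s).filter fun pq => F pq.1 ≠ F pq.2 ∧ K pq.1 ≠ K pq.2
  have hD : D.Nonempty := by
    obtain ⟨p, hp, q, hq, hF, hK⟩ := hpair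
    exact ⟨(p, q), by simp [D, hp, hq, hF, hK]⟩
  obtain ⟨⟨p₁, q₁⟩, hmem, hmin⟩ :=
    D.exists_min_image (fun pq => |(F pq.1 - F pq.2) / (K pq.1 - K pq.2)|) hD
  simp only [D, Finset.mem_filter, Finset.mem_product] at hmem
  obtain ⟨⟨hp₁, hq₁⟩, hF₁, hK₁⟩ := hmem
  have hK₁' : K p₁ - K q₁ ≠ 0 := sub_ne_zero.mpr hK₁
  set c := -(F p₁ - F q₁) / (K p₁ - K q₁)
  have hc : c ≠ 0 := div_ne_zero (neg_ne_zero.mpr (sub_ne_zero.mpr hF₁)) hK₁'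
  -- the slope `c` is the smallest in absolute value, so no pair separated by `F` is reversed
  have hbound : ∀ p ∈ s, ∀ q ∈ s, F p ≠ F q → |c * (K p - K q)| ≤ |F p - F q| := by
    intro p hp q hq hF
    rcases eq_or_ne (K p) (K q) with hK | hK
    · simp [hK]
    have hK' : 0 < |K p - K q| := abs_pos.mpr (sub_ne_zero.mpr hK)
    have hmin' : |c| ≤ |F p - F q| / |K p - K q| := by
      simpa only [c, abs_div, abs_neg] using hmin (p, q) (by simp [D, hp, hq, hF, hK])
    rwa [abs_mul, ← le_div_iff₀ hK']
  refine ⟨c, ⟨p₁, hp₁, q₁, hq₁, fun h => hF₁ (h ▸ rfl), ?_⟩, ?_, ?_⟩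
  · simp only [c]
    field_simp
    ring
  · intro p hp q hq hlt
    have := hbound q hq p hp hlt.ne'
    rw [abs_of_pos (sub_pos.mpr hlt)] at this
    linarith [neg_abs_le (c * (K q - K p))]
  · intro p hp q hq hpq
    simp only [Prod.mk.injEq] at hpq
    refine hFK hp hq (Prod.ext hpq.1 (mul_left_cancel₀ hc ?_))
    linarith [hpq.1, hpq.2]

theorem exists_linear_forms_card_image_add_ge {α : Type*} [DecidableEq α]
    (s : Finset α) (u v : α → ℝ) (huv : InjOn (fun p => (u p, v p)) s)
    (hnc : ¬ ∃ a b c : ℝ, (a ≠ 0 ∨ b ≠ 0) ∧ ∀ p ∈ s, a * u p + b * v p = c) :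
    ∃ a₁ b₁ a₂ b₂ : ℝ, s.card + 1 ≤ (s.image fun p => a₁ * u p + b₁ * v p).card +
        (s.image fun p => a₂ * u p + b₂ * v p).card ∧
      (s.image fun p => a₁ * u p + b₁ * v p).card < s.card ∧
      (s.image fun p => a₂ * u p + b₂ * v p).card < s.card := by
  obtain ⟨p₀, hp₀, q₀, hq₀, hpq₀⟩ : ∃ p ∈ s, ∃ q ∈ s, p ≠ q := by
    by_contra! hs
    rcases s.eq_empty_or_nonempty with rfl | ⟨r, hr⟩
    · exact hnc ⟨1, 0, 0, by simp⟩
    · exact hnc ⟨1, 0, u r, by simp, fun p hp => by simp [hs p hp r hr]⟩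
  -- `F` is the linear form vanishing on `p₀ - q₀`, and `K` the orthogonal one
  set a₀ := v q₀ - v p₀
  set b₀ := u p₀ - u q₀
  set F : α → ℝ := fun p => a₀ * u p + b₀ * v p
  set K : α → ℝ := fun p => -b₀ * u p + a₀ * v p
  have hF₀ : F p₀ = F q₀ := by simp only [F, a₀, b₀]; ring
  have hab : a₀ ≠ 0 ∨ b₀ ≠ 0 := by
    by_contra! ⟨ha, hb⟩
    exact hpq₀ (huv hp₀ hq₀ (Prod.ext (by linarith) (by linarith)))
  have hFK : InjOn (fun p => (F p, K p)) s := by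
    intro p hp q hq hpq
    simp only [Prod.mk.injEq, F, K] at hpq
    have hnorm : a₀ ^ 2 + b₀ ^ 2 ≠ 0 := by rcases hab with h | h <;> positivity
    refine huv hp hq (Prod.ext (mul_left_cancel₀ hnorm ?_) (mul_left_cancel₀ hnorm ?_))
    · linear_combination a₀ * hpq.1 - b₀ * hpq.2
    · linear_combination b₀ * hpq.1 + a₀ * hpq.2
  have hK₀ : K p₀ ≠ K q₀ := fun h => hpq₀ (hFK hp₀ hq₀ (Prod.ext hF₀ h))
  have hpair : ∃ p ∈ s, ∃ q ∈ s, F p ≠ F q ∧ K p ≠ K q := by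
    obtain ⟨r, hr, hFr⟩ : ∃ r ∈ s, F r ≠ F p₀ := by
      by_contra! h
      exact hnc ⟨a₀, b₀, F p₀, hab, h⟩
    rcases eq_or_ne (K r) (K p₀) with h | h
    · exact ⟨r, hr, q₀, hq₀, hF₀ ▸ hFr, h ▸ hK₀⟩
    · exact ⟨r, hr, p₀, hp₀, hFr, h⟩
  obtain ⟨c, ⟨p₁, hp₁, q₁, hq₁, hpq₁, hcol⟩, hmono, hinj⟩ := exists_comonotone_collapse hFK hpair
  have hcount := Finset.card_add_one_le_card_image_add_card_image ⟨p₀, hp₀⟩ hmono hinj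
  have hFlt : (s.image F).card < s.card :=
    Finset.card_image_lt_of_not_injOn fun h => hpq₀ (h hp₀ hq₀ hF₀)
  have hHlt : (s.image fun p => F p + c * K p).card < s.card :=
    Finset.card_image_lt_of_not_injOn fun h => hpq₁ (h hp₁ hq₁ hcol)
  have hH : (fun p => F p + c * K p) = fun p => (a₀ - c * b₀) * u p + (b₀ + c * a₀) * v p := by
    funext p
    simp only [F, K]
    ring
  rw [hH] at hcount hHlt
  exact ⟨a₀, b₀, a₀ - c * b₀, b₀ + c * a₀, hcount, hFlt, hHlt⟩

theorem exists_half_le_card_image_linear_le_card_sub_one {α : Type*} [DecidableEq α]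
    (s : Finset α) (u v : α → ℝ) (huv : InjOn (fun p => (u p, v p)) s)
    (hnc : ¬ ∃ a b c : ℝ, (a ≠ 0 ∨ b ≠ 0) ∧ ∀ p ∈ s, a * u p + b * v p = c) :
    ∃ a b : ℝ, (s.card + 1) / 2 ≤ (s.image fun p => a * u p + b * v p).card ∧
      (s.image fun p => a * u p + b * v p).card ≤ s.card - 1 := by
  obtain ⟨a₁, b₁, a₂, b₂, hsum, h₁, h₂⟩ := exists_linear_forms_card_image_add_ge s u v huv hnc
  rcases le_total (s.image fun p => a₁ * u p + b₁ * v p).card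
    (s.image fun p => a₂ * u p + b₂ * v p).card with hle | hle
  · exact ⟨a₂, b₂, by omega, by omega⟩
  · exact ⟨a₁, b₁, by omega, by omega⟩

theorem accPts_subset_of_tendsto_sub {x y : ℕ → ℝ}
    (h : Tendsto (fun l => x l - y l) atTop (𝓝 0)) : AccPts x ⊆ AccPts y := by
  intro v hv ε hε
  obtain ⟨N, hN⟩ := Metric.tendsto_atTop.mp h (ε / 2) (half_pos hε)
  refine ((hv (ε / 2) (half_pos hε)).sdiff (finite_lt_nat N)).mono ?_
  rintro l ⟨hl, hlN⟩
  have := hN l (not_lt.mp hlN)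
  rw [Real.dist_eq, sub_zero] at this
  change |x l - v| < ε / 2 at hl
  change |y l - v| < ε
  calc |y l - v| ≤ |x l - y l| + |x l - v| := by
        rw [abs_sub_comm (x l)]; exact abs_sub_le _ _ _
    _ < ε := by linarith

theorem accPts_eq_of_tendsto_sub {x y : ℕ → ℝ}
    (h : Tendsto (fun l => x l - y l) atTop (𝓝 0)) : AccPts x = AccPts y :=
  (accPts_subset_of_tendsto_sub h).antisymm <| accPts_subset_of_tendsto_sub <| by
    simpa using h.neg

theorem accPts_comp_of_finite {ι : Type*} [Finite ι] (g : ι → ℝ) (σ : ℕ → ι) :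
    AccPts (g ∘ σ) = g '' {i | (σ ⁻¹' {i}).Infinite} := by
  apply Subset.antisymm
  · intro v hv
    by_contra hvA
    obtain ⟨ε, hε, hball⟩ := Metric.isOpen_iff.mp
      (toFinite (g '' {i | (σ ⁻¹' {i}).Infinite})).isClosed.isOpen_compl v hvA
    refine hv ε hε (((toFinite {i | ¬(σ ⁻¹' {i}).Infinite}).biUnion
      fun i hi => not_infinite.mp hi).subset fun l hl => ?_)
    refine mem_biUnion (x := σ l) (fun hinf => hball ?_ ⟨σ l, hinf, rfl⟩) rfl
    simpa [Real.dist_eq] using hl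
  · rintro _ ⟨i, hi, rfl⟩ ε hε
    exact hi.mono fun l hl => by simp_all

theorem exists_index_of_partition {ι : Type*} {S : ι → Set ℕ}
    (hdisj : Pairwise fun i j => Disjoint (S i) (S j)) (hcov : ⋃ i, S i = univ) :
    ∃ I : ℕ → ι, ∀ l i, l ∈ S i ↔ I l = i := by
  choose I hI using fun l => mem_iUnion.mp (hcov.symm ▸ mem_univ l : l ∈ ⋃ i, S i)
  refine ⟨I, fun l i => ⟨fun hl => ?_, fun h => h ▸ hI l⟩⟩
  by_contra hne
  exact disjoint_left.mp (hdisj hne) (hI l) hl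

theorem sum_indicator_const_eq_of_index {ι : Type*} [Fintype ι] {S : ι → Set ℕ} {I : ℕ → ι}
    (hI : ∀ l i, l ∈ S i ↔ I l = i) (ξ : ι → ℝ) (l : ℕ) :
    ∑ i, (S i).indicator (fun _ => ξ i) l = ξ (I l) := by
  rw [Finset.sum_eq_single (I l)]
  · exact indicator_of_mem ((hI l _).mpr rfl) _
  · exact fun i _ hi => indicator_of_notMem (fun h => hi ((hI l i).mp h).symm) _
  · simp

theorem stmt_18_general (x y : ℕ → ℝ) (n k : ℕ)
    (S : Fin n → Set ℕ) (ξ : Fin n → ℝ)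
    (hSdisj : Pairwise (fun i j => Disjoint (S i) (S j)))
    (hScov : (⋃ i, S i) = Set.univ) (hξ : Function.Injective ξ)
    (hxrep : Tendsto (fun l => x l - ∑ i, (S i).indicator (fun _ => ξ i) l) atTop (𝓝 0))
    (T : Fin k → Set ℕ) (η : Fin k → ℝ)
    (hTdisj : Pairwise (fun i j => Disjoint (T i) (T j)))
    (hTcov : (⋃ j, T j) = Set.univ) (hη : Function.Injective η)
    (hyrep : Tendsto (fun l => y l - ∑ j, (T j).indicator (fun _ => η j) l) atTop (𝓝 0))
    (E : Set (Fin n × Fin k)) (hE : E = {p | (S p.1 ∩ T p.2).Infinite})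
    (hnc : ¬ ∃ a b c : ℝ, (a ≠ 0 ∨ b ≠ 0) ∧ ∀ p ∈ E, a * ξ p.1 + b * η p.2 = c) :
    ∃ z ∈ Submodule.span ℝ ({x, y} : Set (ℕ → ℝ)),
      (AccPts z).Finite ∧ (E.ncard + 1) / 2 ≤ (AccPts z).ncard ∧
        (AccPts z).ncard ≤ E.ncard - 1 := by
  classical
  lift E to Finset (Fin n × Fin k) using toFinite E with s
  obtain ⟨a, b, hlow, hhigh⟩ := exists_half_le_card_image_linear_le_card_sub_one s
    (ξ ∘ Prod.fst) (η ∘ Prod.snd)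
    (fun p _ q _ h => Prod.ext (hξ (congrArg Prod.fst h)) (hη (congrArg Prod.snd h))) hnc
  obtain ⟨I, hI⟩ := exists_index_of_partition hSdisj hScov
  obtain ⟨J, hJ⟩ := exists_index_of_partition hTdisj hTcov
  set g : Fin n × Fin k → ℝ := fun p => a * ξ p.1 + b * η p.2
  have hlim : Tendsto (fun l => (a • x + b • y) l - (g ∘ fun l => (I l, J l)) l) atTop (𝓝 0) := by
    have := (hxrep.const_mul a).add (hyrep.const_mul b)
    rw [mul_zero, mul_zero, add_zero] at this
    refine this.congr fun l => ?_
    simp only [sum_indicator_const_eq_of_index hI, sum_indicator_const_eq_of_index hJ, g,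
      Function.comp, Pi.add_apply, Pi.smul_apply, smul_eq_mul]
    ring
  have hacc : AccPts (a • x + b • y) = ↑(s.image g) := by
    rw [accPts_eq_of_tendsto_sub hlim, accPts_comp_of_finite, Finset.coe_image, hE]
    congr with p
    have hfiber : (fun l => (I l, J l)) ⁻¹' {p} = S p.1 ∩ T p.2 := by
      ext l
      simp [hI, hJ, Prod.ext_iff]
    rw [hfiber]
  refine ⟨a • x + b • y, Submodule.mem_span_pair.mpr ⟨a, b, rfl⟩, ?_⟩
  rw [hacc, ncard_coe_finset, ncard_coe_finset]
  exact ⟨Finset.finite_toSet _, hlow, hhigh⟩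

theorem stmt_18 (x y : ℕ → ℝ) (n k : ℕ)
    (S : Fin n → Set ℕ) (ξ : Fin n → ℝ)
    (hSinf : ∀ i, (S i).Infinite) (hSdisj : Pairwise (fun i j => Disjoint (S i) (S j)))
    (hScov : (⋃ i, S i) = Set.univ) (hξ : Function.Injective ξ)
    (hxrep : Tendsto (fun l => x l - ∑ i, (S i).indicator (fun _ => ξ i) l) atTop (𝓝 0))
    (T : Fin k → Set ℕ) (η : Fin k → ℝ)
    (hTinf : ∀ j, (T j).Infinite) (hTdisj : Pairwise (fun i j => Disjoint (T i) (T j)))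
    (hTcov : (⋃ j, T j) = Set.univ) (hη : Function.Injective η)
    (hyrep : Tendsto (fun l => y l - ∑ j, (T j).indicator (fun _ => η j) l) atTop (𝓝 0))
    (E : Set (Fin n × Fin k)) (hE : E = {p | (S p.1 ∩ T p.2).Infinite})
    (hnc : ¬ ∃ a b c : ℝ, (a ≠ 0 ∨ b ≠ 0) ∧ ∀ p ∈ E, a * ξ p.1 + b * η p.2 = c) :
    ∃ z ∈ Submodule.span ℝ ({x, y} : Set (ℕ → ℝ)),
      (AccPts z).Finite ∧ (E.ncard + 1) / 2 ≤ (AccPts z).ncard ∧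
        (AccPts z).ncard ≤ E.ncard - 1 :=
  stmt_18_general x y n k S ξ hSdisj hScov hξ hxrep T η hTdisj hTcov hη hyrep E hE hnc
end

section
/- The set ⋃_{1 ≤ n < ω} L(2n+1) of bounded sequences with an odd number (at least 3) of accumulation points is 𝔠-lineable in ℓ∞: there exists a linear subspace V of ℓ∞ of dimension continuum such that every non-zero vector of V has L_z = −L_z, 0 ∈ L_z, and |L_z| is a finite odd number at least 3. -/
open Filter Topology Set

abbrev C : Type := Finset ℚ × Finset (Finset ℚ)
noncomputable instance : Denumerable C := Denumerable.ofEncodableOfInfinite C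
noncomputable def eqv : ℕ ≃ C := (Denumerable.eqv C).symm
noncomputable def memB (t : ℝ) (p : C) : Bool := decide (p.1.filter (fun q : ℚ => (q:ℝ) < t) ∈ p.2)
noncomputable def e (t : ℝ) (p : C) : ℝ := if memB t p then 1 else -1

noncomputable def mid (a b : ℝ) : ℚ := if h : a < b then (exists_rat_btwn h).choose else 0

lemma mid_spec {a b : ℝ} (h : a < b) : a < (mid a b : ℝ) ∧ ((mid a b : ℝ)) < b := by
  rw [mid, dif_pos h]; exact (exists_rat_btwn h).choose_spec

lemma patterns_infinite (s : Finset ℝ) (σ : ℝ → Bool) :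
    {p : C | ∀ t ∈ s, memB t p = σ t}.Infinite := by
  classical
  set Q : Finset ℚ := (s ×ˢ s).image (fun p => mid p.1 p.2) with hQ
  obtain ⟨q0, hq0⟩ := exists_rat_lt ((insert (0:ℝ) s).min' (Finset.insert_nonempty _ _))
  have hq0' : ∀ t ∈ s, (q0 : ℝ) < t := by
    intro t ht
    exact lt_of_lt_of_le hq0 (Finset.min'_le _ _ (Finset.mem_insert_of_mem ht))
  set F : ℕ → Finset ℚ := fun m => Q ∪ (Finset.range m).image (fun j : ℕ => q0 - (j:ℚ)) with hF
  set G : ℕ → Finset (Finset ℚ) := fun m =>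
    (s.filter (fun t => σ t = true)).image (fun t => (F m).filter (fun q : ℚ => (q:ℝ) < t)) with hG
  set W : ℕ → C := fun m => (F m, G m) with hW
  -- injectivity of the filter map on s
  have hinj : ∀ m, ∀ a ∈ s, ∀ b ∈ s, a ≠ b →
      (F m).filter (fun q : ℚ => (q:ℝ) < a) ≠ (F m).filter (fun q : ℚ => (q:ℝ) < b) := by
    have key : ∀ m, ∀ a ∈ s, ∀ b ∈ s, a < b →
        (F m).filter (fun q : ℚ => (q:ℝ) < a) ≠ (F m).filter (fun q : ℚ => (q:ℝ) < b) := by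
      intro m a ha b hb hab heq
      have hmidF : mid a b ∈ F m := by
        apply Finset.mem_union_left
        exact Finset.mem_image.2 ⟨(a, b), Finset.mem_product.2 ⟨ha, hb⟩, rfl⟩
      have h1 : mid a b ∈ (F m).filter (fun q : ℚ => (q:ℝ) < b) :=
        Finset.mem_filter.2 ⟨hmidF, (mid_spec hab).2⟩
      rw [← heq] at h1
      exact absurd (Finset.mem_filter.1 h1).2 (not_lt.2 (mid_spec hab).1.le)
    intro m a ha b hb hab
    rcases lt_or_gt_of_ne hab with h | h
    · exact key m a ha b hb h
    · exact fun heq => key m b hb a ha h heq.symm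
  have hWmem : ∀ m, W m ∈ {p : C | ∀ t ∈ s, memB t p = σ t} := by
    intro m t ht
    show memB t (W m) = σ t
    rw [memB]
    cases hσ : σ t with
    | true =>
      simp only [decide_eq_true_eq]
      exact Finset.mem_image.2 ⟨t, Finset.mem_filter.2 ⟨ht, hσ⟩, rfl⟩
    | false =>
      simp only [decide_eq_false_iff_not]
      intro hmem
      obtain ⟨t', ht', heq⟩ := Finset.mem_image.1 hmem
      obtain ⟨ht's, hσ'⟩ := Finset.mem_filter.1 ht'
      have : t' ≠ t := by rintro rfl; rw [hσ'] at hσ; exact Bool.noConfusion hσ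
      exact hinj m t' ht's t ht this heq
  have hcard : ∀ m, m ≤ (W m).1.card := by
    intro m
    have hsub : (Finset.range m).image (fun j : ℕ => q0 - (j:ℚ)) ⊆ F m := fun x hx => Finset.mem_union_right _ hx
    have : ((Finset.range m).image (fun j : ℕ => q0 - (j:ℚ))).card = m := by
      rw [Finset.card_image_of_injective _ (fun i j h => by
        have : (i : ℚ) = j := by linarith
        exact_mod_cast this), Finset.card_range]
    calc m = ((Finset.range m).image (fun j : ℕ => q0 - (j:ℚ))).card := this.symm
    _ ≤ (F m).card := Finset.card_le_card hsub
  by_contra hcon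
  rw [Set.not_infinite] at hcon
  obtain ⟨b, hb⟩ := (hcon.image (fun p => p.1.card)).bddAbove
  have h1 : (W (b+1)).1.card ≤ b := hb ⟨W (b+1), hWmem _, rfl⟩
  have h2 := hcard (b+1)
  omega

noncomputable def X (t : ℝ) : linf := ⟨fun n => if n % 2 = 0 then e t (eqv (n/2)) else 0, by
  apply memℓp_infty
  refine ⟨1, ?_⟩
  rintro y ⟨n, rfl⟩
  simp only [Real.norm_eq_abs]
  split
  · rw [e]; split <;> norm_num
  · norm_num⟩

noncomputable def zc (c : ℝ →₀ ℝ) (p : C) : ℝ := ∑ t ∈ c.support, c t * e t p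
noncomputable def Zfun (c : ℝ →₀ ℝ) (n : ℕ) : ℝ := if n % 2 = 0 then zc c (eqv (n/2)) else 0
noncomputable def val (c : ℝ →₀ ℝ) (σ : ℝ → Bool) : ℝ :=
  ∑ t ∈ c.support, c t * (if σ t then 1 else -1)
noncomputable def A (c : ℝ →₀ ℝ) : Set ℝ := insert 0 (Set.range (val c))

lemma zc_eq (c : ℝ →₀ ℝ) (p : C) : zc c p = val c (fun t => memB t p) := by
  rw [zc, val]; exact Finset.sum_congr rfl (fun t _ => by rw [e])

lemma val_congr {c : ℝ →₀ ℝ} {σ τ : ℝ → Bool} (h : ∀ t ∈ c.support, σ t = τ t) :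
    val c σ = val c τ :=
  Finset.sum_congr rfl (fun t ht => by rw [h t ht])

lemma A_finite (c : ℝ →₀ ℝ) : (A c).Finite := by
  apply Set.Finite.insert
  have : Set.range (val c) ⊆ Set.range (fun τ : (↥c.support → Bool) =>
      ∑ t ∈ c.support.attach, c t * (if τ t then 1 else -1)) := by
    rintro - ⟨σ, rfl⟩
    refine ⟨fun t => σ t, ?_⟩
    rw [val, ← Finset.sum_attach c.support (fun t => c t * (if σ t then 1 else -1))]
  exact (Set.finite_range _).subset this

lemma Zfun_mem (c : ℝ →₀ ℝ) (n : ℕ) : Zfun c n ∈ A c := by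
  rw [Zfun]
  split
  · rw [zc_eq]; exact Set.mem_insert_of_mem _ ⟨_, rfl⟩
  · exact Set.mem_insert _ _

lemma exists_n (c : ℝ →₀ ℝ) (σ : ℝ → Bool) : {n : ℕ | Zfun c n = val c σ}.Infinite := by
  have h := patterns_infinite c.support σ
  have himg : ((fun p : C => 2 * (eqv.symm p)) '' {p : C | ∀ t ∈ c.support, memB t p = σ t}).Infinite :=
    h.image (Set.injOn_of_injective (fun a b hab => eqv.symm.injective (by omega)))
  apply himg.mono
  rintro - ⟨p, hp, rfl⟩
  show Zfun c (2 * eqv.symm p) = val c σ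
  have h2 : (2 * (eqv.symm p : ℕ)) % 2 = 0 := by omega
  have h3 : (2 * (eqv.symm p : ℕ)) / 2 = eqv.symm p := by omega
  rw [Zfun, if_pos h2, h3, Equiv.apply_symm_apply, zc_eq]
  exact val_congr hp

lemma val_mem_acc (c : ℝ →₀ ℝ) (σ : ℝ → Bool) : val c σ ∈ AccPts (Zfun c) := by
  intro ε hε
  apply (exists_n c σ).mono
  intro n hn
  simp only [Set.mem_setOf_eq] at hn ⊢
  rw [hn]; simpa using hε

lemma zero_mem_acc (c : ℝ →₀ ℝ) : (0:ℝ) ∈ AccPts (Zfun c) := by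
  intro ε hε
  have : Set.range (fun k : ℕ => 2 * k + 1) ⊆ {n : ℕ | |Zfun c n - 0| < ε} := by
    rintro - ⟨k, rfl⟩
    have : (2 * k + 1) % 2 = 1 := by omega
    simp only [Set.mem_setOf_eq, Zfun, this]
    norm_num [hε]
  exact ((Set.infinite_range_of_injective (fun a b h => by omega)).mono this)

lemma acc_eq (c : ℝ →₀ ℝ) : AccPts (Zfun c) = A c := by
  apply Set.Subset.antisymm
  · intro η hη
    by_contra hn
    set F := (A_finite c).toFinset with hF
    have hFne : F.Nonempty := ⟨0, by simp [hF, A]⟩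
    set ε := (F.image (fun a => |a - η|)).min' (hFne.image _) with hε
    have hεpos : 0 < ε := by
      have := Finset.min'_mem (F.image (fun a => |a - η|)) (hFne.image _)
      obtain ⟨a, ha, heq⟩ := Finset.mem_image.1 this
      rw [hε, ← heq]
      have : a ≠ η := by rintro rfl; exact hn ((A_finite c).mem_toFinset.1 ha)
      exact abs_pos.2 (sub_ne_zero.2 this)
    have hempty : {n : ℕ | |Zfun c n - η| < ε} = ∅ := by
      ext n
      simp only [Set.mem_setOf_eq, Set.mem_empty_iff_false, iff_false, not_lt]
      apply Finset.min'_le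
      exact Finset.mem_image.2 ⟨Zfun c n, (A_finite c).mem_toFinset.2 (Zfun_mem c n), rfl⟩
    have := hη ε hεpos
    rw [hempty] at this
    exact this (Set.finite_empty)
  · intro a ha
    rcases ha with rfl | ⟨σ, rfl⟩
    · exact zero_mem_acc c
    · exact val_mem_acc c σ

lemma neg_val (c : ℝ →₀ ℝ) (σ : ℝ → Bool) : -(val c σ) = val c (fun t => !(σ t)) := by
  rw [val, val, ← Finset.sum_neg_distrib]
  exact Finset.sum_congr rfl (fun t _ => by cases h : σ t <;> simp [h])

lemma A_symm (c : ℝ →₀ ℝ) : A c = -(A c) := by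
  have key : ∀ a ∈ A c, -a ∈ A c := by
    rintro a (rfl | ⟨σ, rfl⟩)
    · rw [neg_zero]; exact Set.mem_insert _ _
    · rw [neg_val]; exact Set.mem_insert_of_mem _ ⟨_, rfl⟩
  ext a
  rw [Set.mem_neg]
  exact ⟨key a, fun h => by have := key _ h; rwa [neg_neg] at this⟩

noncomputable def coeL : linf →ₗ[ℝ] (ℕ → ℝ) where
  toFun f := ⇑f
  map_add' := lp.coeFn_add
  map_smul' := lp.coeFn_smul

lemma coe_sum_s19 (c : ℝ →₀ ℝ) : ⇑(c.sum fun t a => a • X t) = Zfun c := by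
  have h1 : ⇑(c.sum fun t a => a • X t) = ∑ t ∈ c.support, c t • ⇑(X t) := by
    show coeL (c.sum fun t a => a • X t) = _
    rw [map_finsuppSum]
    rw [Finsupp.sum]
    exact Finset.sum_congr rfl (fun t _ => by rw [map_smul]; rfl)
  funext n
  rw [h1, Finset.sum_apply]
  by_cases h : n % 2 = 0
  · rw [Zfun, if_pos h, zc]
    refine Finset.sum_congr rfl (fun t _ => ?_)
    simp only [Pi.smul_apply, smul_eq_mul]
    have : ⇑(X t) n = if n % 2 = 0 then e t (eqv (n/2)) else 0 := rfl
    rw [this, if_pos h]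
  · rw [Zfun, if_neg h]
    apply Finset.sum_eq_zero
    intro t _
    simp only [Pi.smul_apply, smul_eq_mul]
    have : ⇑(X t) n = if n % 2 = 0 then e t (eqv (n/2)) else 0 := rfl
    rw [this, if_neg h, mul_zero]

lemma val_pos {c : ℝ →₀ ℝ} (hc : c ≠ 0) : 0 < val c (fun t => decide (0 ≤ c t)) := by
  rw [val]
  have heq : ∀ t ∈ c.support, c t * (if (decide (0 ≤ c t) : Bool) then (1:ℝ) else -1) = |c t| := by
    intro t _
    by_cases h : 0 ≤ c t
    · simp [h, abs_of_nonneg h]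
    · have hd : decide (0 ≤ c t) = false := decide_eq_false h
      rw [hd, abs_of_neg (not_le.1 h)]
      norm_num
  rw [Finset.sum_congr rfl heq]
  apply Finset.sum_pos
  · intro t ht
    exact abs_pos.2 (Finsupp.mem_support_iff.1 ht)
  · exact Finsupp.support_nonempty_iff.2 hc

lemma linIndep : LinearIndependent ℝ X := by
  rw [linearIndependent_iff]
  intro l hl
  by_contra hne
  have hz : Zfun l = 0 := by
    rw [← coe_sum_s19, ← Finsupp.linearCombination_apply, hl]
    exact lp.coeFn_zero _ _
  obtain ⟨n, hn⟩ := (exists_n l (fun t => decide (0 ≤ l t))).nonempty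
  have h1 := val_pos hne
  rw [Set.mem_setOf_eq, hz] at hn
  simp only [Pi.zero_apply] at hn
  rw [← hn] at h1
  exact lt_irrefl _ h1

lemma odd_ncard {S : Set ℝ} (hfin : S.Finite) (hsym : S = -S) (h0 : (0:ℝ) ∈ S) :
    Odd S.ncard := by
  classical
  have hmem : ∀ a : ℝ, a ∈ S → -a ∈ S := by
    intro a h
    rw [hsym, Set.mem_neg, neg_neg]; exact h
  set F := hfin.toFinset with hFdef
  have h0F : (0:ℝ) ∈ F := hfin.mem_toFinset.2 h0
  set P := F.filter (fun a => 0 < a) with hP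
  set N := F.filter (fun a => a < 0) with hN
  have hsplit : F.card = P.card + (F.filter (fun a => ¬ 0 < a)).card :=
    (Finset.card_filter_add_card_filter_not _).symm
  have hNP : N = P.image (fun a => -a) := by
    ext a
    simp only [hN, hP, Finset.mem_filter, Finset.mem_image]
    constructor
    · intro ⟨haF, ha⟩
      refine ⟨-a, ⟨?_, by linarith⟩, by ring⟩
      exact hfin.mem_toFinset.2 (hmem a (hfin.mem_toFinset.1 haF))
    · rintro ⟨b, ⟨hbF, hb⟩, rfl⟩
      constructor
      · exact hfin.mem_toFinset.2 (hmem b (hfin.mem_toFinset.1 hbF))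
      · linarith
  have hNcard : N.card = P.card := by
    rw [hNP, Finset.card_image_of_injective _ neg_injective]
  have hrest : (F.filter (fun a => ¬ 0 < a)).card = N.card + 1 := by
    have : F.filter (fun a => ¬ 0 < a) = insert (0:ℝ) N := by
      ext a
      simp only [Finset.mem_filter, Finset.mem_insert, hN, not_lt]
      constructor
      · intro ⟨haF, ha⟩
        rcases ha.lt_or_eq with h | h
        · exact Or.inr ⟨haF, h⟩
        · exact Or.inl h
      · rintro (rfl | ⟨haF, ha⟩)
        · exact ⟨h0F, le_refl 0⟩
        · exact ⟨haF, ha.le⟩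
    rw [this, Finset.card_insert_of_notMem (by simp [hN])]
  have hcard : S.ncard = F.card := Set.ncard_eq_toFinset_card S hfin
  refine ⟨P.card, ?_⟩
  rw [hcard, hsplit, hrest, hNcard]
  ring

theorem stmt_19 :
    ∃ V : Submodule ℝ linf, Module.rank ℝ V = Cardinal.continuum ∧
      ∀ x ∈ V, x ≠ 0 →
        AccPts ⇑x = -(AccPts ⇑x) ∧ (0 : ℝ) ∈ AccPts ⇑x ∧
        (AccPts ⇑x).Finite ∧ Odd (AccPts ⇑x).ncard ∧ 3 ≤ (AccPts ⇑x).ncard := by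
  refine ⟨Submodule.span ℝ (Set.range X), ?_, ?_⟩
  · rw [rank_span linIndep, Cardinal.mk_range_eq _ linIndep.injective, Cardinal.mk_real]
  · intro x hx hxne
    obtain ⟨c, rfl⟩ := Finsupp.mem_span_range_iff_exists_finsupp.mp hx
    have hc : c ≠ 0 := by
      rintro rfl
      simp only [Finsupp.sum_zero_index] at hxne
      exact hxne rfl
    rw [coe_sum_s19 c, acc_eq]
    set v := val c (fun t => decide (0 ≤ c t)) with hv
    have hvpos : 0 < v := val_pos hc
    have hvA : v ∈ A c := Set.mem_insert_of_mem _ ⟨_, rfl⟩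
    have hnvA : -v ∈ A c := by rw [A_symm c, Set.mem_neg, neg_neg]; exact hvA
    have h0A : (0:ℝ) ∈ A c := Set.mem_insert _ _
    refine ⟨A_symm c, h0A, A_finite c, odd_ncard (A_finite c) (A_symm c) h0A, ?_⟩
    have hsub : ({0, v, -v} : Set ℝ) ⊆ A c := by
      intro a ha
      simp only [Set.mem_insert_iff, Set.mem_singleton_iff] at ha
      rcases ha with rfl | rfl | rfl <;> assumption
    have h3 : ({0, v, -v} : Set ℝ).ncard = 3 := by
      rw [Set.ncard_insert_of_notMem (by
        simp only [Set.mem_insert_iff, Set.mem_singleton_iff]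
        push_neg
        constructor <;> intro h <;> linarith)]
      rw [Set.ncard_pair (by intro h; linarith)]
    calc (3:ℕ) = ({0, v, -v} : Set ℝ).ncard := h3.symm
    _ ≤ (A c).ncard := Set.ncard_le_ncard hsub (A_finite c)
end
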